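/- arXiv:2101.11168 — 5 statements merged into one kernel-verified Lean document; each statement's English description precedes it below -/
import Mathlib

section
/- Let H be a hypergraph with edge cut F. Then F is a minimal edge cut (i.e., no edge cut of H is a proper subset of F) if and only if every edge of F intersects the vertex set of each connected component of H \ F. -/
set_option linter.unusedSectionVars false

universe u

variable {V : Type u} {β : Type u} {I : Type u}

/-- A hypergraph on vertex type `V` with edge-index type `β`: a finite vertex set,
a finite (multi)set of edges indexed by `β`, and an incidence map giving the
vertex set of each edge. -/
structure HGraph (V β : Type u) [DecidableEq V] where
  verts : Finset V
  edges : Finset β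
  inc : β → Finset V
  inc_sub : ∀ e ∈ edges, inc e ⊆ verts

namespace HGraph

variable [DecidableEq V] [DecidableEq β] [DecidableEq I]

/-- A walk in a hypergraph: an alternating sequence of vertices and edges,
consecutive vertices being distinct and both contained in the intervening edge. -/
inductive Walk (H : HGraph V β) : V → V → Type u where
  | nil (v : V) (hv : v ∈ H.verts) : Walk H v v
  | cons (u v w : V) (e : β) (he : e ∈ H.edges) (hu : u ∈ H.inc e) (hv : v ∈ H.inc e)
      (hne : u ≠ v) (p : Walk H v w) : Walk H u w

namespace Walk

/-- The list of steps `(v_{i-1}, e_i, v_i)` of a walk. -/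
def steps {H : HGraph V β} : ∀ {u v : V}, H.Walk u v → List (V × β × V)
  | _, _, .nil _ _ => []
  | _, _, .cons u a _ e _ _ _ _ p => (u, e, a) :: p.steps

/-- The list of edges traversed by a walk, in order. -/
def edgeList {H : HGraph V β} {u v : V} (w : H.Walk u v) : List β :=
  w.steps.map (fun s => s.2.1)

/-- The anchors of a walk: the vertices appearing in its sequence. -/
def anchors {H : HGraph V β} {u v : V} (w : H.Walk u v) : List V :=
  u :: w.steps.map (fun s => s.2.2)

end Walk

/-- A closed trail: a closed walk of length at least 2 with pairwise distinct edges. -/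
structure ClosedTrail (H : HGraph V β) where
  base : V
  walk : H.Walk base base
  two_le : 2 ≤ walk.edgeList.length
  nodup : walk.edgeList.Nodup

/-- The closed trail `T` traverses the vertex `u` via the edge `e`, i.e. `eu` or `ue`
is a subsequence of the walk. -/
def ClosedTrail.traverses {H : HGraph V β} (T : H.ClosedTrail) (u : V) (e : β) : Prop :=
  ∃ s ∈ T.walk.steps, s.2.1 = e ∧ (s.1 = u ∨ s.2.2 = u)

/-- An Euler family: a family of pairwise edge-disjoint and anchor-disjoint closed
trails jointly traversing every edge exactly once. -/
def IsEulerFamily (H : HGraph V β) {κ : Type} (T : κ → H.ClosedTrail) : Prop :=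
  (∀ k l, k ≠ l → ∀ e, e ∈ (T k).walk.edgeList → e ∉ (T l).walk.edgeList) ∧
  (∀ k l, k ≠ l → ∀ v, v ∈ (T k).walk.anchors → v ∉ (T l).walk.anchors) ∧
  (∀ e ∈ H.edges, ∃ k, e ∈ (T k).walk.edgeList)

def HasEulerFamily (H : HGraph V β) : Prop :=
  ∃ (κ : Type) (T : κ → H.ClosedTrail), H.IsEulerFamily T

/-- A non-empty Euler family. -/
def HasNonemptyEulerFamily (H : HGraph V β) : Prop :=
  ∃ (κ : Type) (T : κ → H.ClosedTrail), Nonempty κ ∧ H.IsEulerFamily T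

/-- An Euler family is spanning if every vertex is an anchor of some trail in it. -/
def IsSpanningFamily (H : HGraph V β) {κ : Type} (T : κ → H.ClosedTrail) : Prop :=
  ∀ v ∈ H.verts, ∃ k, v ∈ (T k).walk.anchors

/-- An Euler tour: a closed trail traversing every edge (exactly once). -/
def IsEulerTour (H : HGraph V β) (T : H.ClosedTrail) : Prop :=
  ∀ e ∈ H.edges, e ∈ T.walk.edgeList

def HasEulerTour (H : HGraph V β) : Prop := ∃ T : H.ClosedTrail, H.IsEulerTour T

/-- A hypergraph is connected if every two vertices are joined by a walk. -/
def Connected (H : HGraph V β) : Prop :=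
  ∀ u ∈ H.verts, ∀ v ∈ H.verts, Nonempty (H.Walk u v)

/-- `H \ F` : deletion of the edges in `F`. -/
def edel (H : HGraph V β) (F : Finset β) : HGraph V β where
  verts := H.verts
  edges := H.edges \ F
  inc := H.inc
  inc_sub := fun e he => H.inc_sub e (Finset.mem_sdiff.mp he).1

/-- The subhypergraph induced by a vertex set `U`. -/
def induce (H : HGraph V β) (U : Finset V) : HGraph V β where
  verts := U
  edges := H.edges.filter (fun e => (H.inc e ∩ U).Nonempty)
  inc := fun e => H.inc e ∩ U
  inc_sub := fun _ _ => Finset.inter_subset_right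

/-- The degree of a vertex: the number of edges incident with it. -/
def degree (H : HGraph V β) (v : V) : ℕ :=
  (H.edges.filter (fun e => v ∈ H.inc e)).card

/-- `[S, V - S]_H` : the set of edges meeting both `S` and its complement. -/
def cutSet (H : HGraph V β) (S : Finset V) : Finset β :=
  H.edges.filter (fun e => (H.inc e ∩ S).Nonempty ∧ (H.inc e ∩ (H.verts \ S)).Nonempty)

/-- An edge cut: a set of edges of the form `[S, V - S]_H` for nonempty proper `S`. -/
def IsEdgeCut (H : HGraph V β) (F : Finset β) : Prop :=
  ∃ S : Finset V, S ⊆ H.verts ∧ S.Nonempty ∧ S ≠ H.verts ∧ F = H.cutSet S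

/-- A minimal edge cut: an edge cut no proper subset of which is an edge cut. -/
def IsMinimalEdgeCut (H : HGraph V β) (F : Finset β) : Prop :=
  H.IsEdgeCut F ∧ ∀ F' ⊂ F, ¬ H.IsEdgeCut F'

/-- `C` is the vertex set of a connected component of `H` : nonempty, connected as an
induced subhypergraph, and closed under the edges of `H`. -/
def IsComponent (H : HGraph V β) (C : Finset V) : Prop :=
  C.Nonempty ∧ C ⊆ H.verts ∧ (H.induce C).Connected ∧
    ∀ e ∈ H.edges, (H.inc e ∩ C).Nonempty → H.inc e ⊆ C

/-- `P` is a partition of `V(H)` into unions of the vertex sets of the connected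
components of `H \ F`. -/
def IsCompUnionPartition (H : HGraph V β) (F : Finset β) (P : I → Finset V) : Prop :=
  (∀ i, (P i).Nonempty) ∧ (∀ i, P i ⊆ H.verts) ∧ (∀ v ∈ H.verts, ∃! i, v ∈ P i) ∧
    ∀ e ∈ H.edges, e ∉ F → ∀ i, (H.inc e ∩ P i).Nonempty → H.inc e ⊆ P i

/-- `P` lists exactly the vertex sets of the connected components of `H \ F`. -/
def IsComponentPartition (H : HGraph V β) (F : Finset β) (P : I → Finset V) : Prop :=
  H.IsCompUnionPartition F P ∧ ∀ i, ((H.edel F).induce (P i)).Connected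

/-- The union `P i ∪ P j` associated with an unordered pair. -/
def pairFinset (P : I → Finset V) : Sym2 I → Finset V :=
  Sym2.lift ⟨fun i j => P i ∪ P j, fun _ _ => Finset.union_comm _ _⟩

/-- `α : F → I^[2]` is an edge cut assignment. -/
def IsECA (H : HGraph V β) (F : Finset β) (P : I → Finset V) (α : β → Sym2 I) : Prop :=
  ∀ f ∈ F, ∀ i j, α f = s(i, j) →
    (H.inc f ∩ P i).Nonempty ∧ (H.inc f ∩ P j).Nonempty ∧
      (i = j → 2 ≤ (H.inc f ∩ P i).card)

/-- The hypergraph `H^α` associated with an edge cut assignment `α`: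
each `f ∈ F` is replaced by `f^α = f ∩ (V_i ∪ V_j)` where `α f = ij`. -/
def assign (H : HGraph V β) (F : Finset β) (P : I → Finset V) (α : β → Sym2 I) :
    HGraph V β where
  verts := H.verts
  edges := H.edges
  inc := fun e => if e ∈ F then H.inc e ∩ pairFinset P (α e) else H.inc e
  inc_sub := by
    intro e he
    try dsimp only
    split
    · exact Finset.inter_subset_left.trans (H.inc_sub e he)
    · exact H.inc_sub e he

/-- The multigraph `G^α` associated with an edge cut assignment `α`, viewed as a
hypergraph on the vertex set `I` whose edges (indexed by `F`) are the pairs `α f`. -/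
def assignGraph [Fintype I] (F : Finset β) (α : β → Sym2 I) : HGraph I β where
  verts := Finset.univ
  edges := F
  inc := fun f => Sym2.lift ⟨fun i j => ({i, j} : Finset I), fun _ _ => Finset.pair_comm _ _⟩ (α f)
  inc_sub := fun _ _ => fun _ _ => Finset.mem_univ _

/-- The collapsed hypergraph `H ∘ S` with collapsed vertex `uc`. -/
def collapse (H : HGraph V β) (S : Finset V) (uc : V) : HGraph V β where
  verts := (H.verts \ S) ∪ {uc}
  edges := H.edges.filter (fun e => (H.inc e ∩ (H.verts \ S)).Nonempty)
  inc := fun e => if (H.inc e ∩ S).Nonempty then (H.inc e \ S) ∪ {uc} else H.inc e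
  inc_sub := by
    intro e he
    rw [Finset.mem_filter] at he
    try dsimp only
    split
    · intro x hx
      rcases Finset.mem_union.mp hx with h | h
      · exact Finset.mem_union_left _
          (Finset.mem_sdiff.mpr ⟨H.inc_sub e he.1 (Finset.mem_sdiff.mp h).1,
            (Finset.mem_sdiff.mp h).2⟩)
      · exact Finset.mem_union_right _ h
    · intro x hx
      rename_i h
      exact Finset.mem_union_left _ (Finset.mem_sdiff.mpr
        ⟨H.inc_sub e he.1 hx, fun hxS => h ⟨x, Finset.mem_inter.mpr ⟨hx, hxS⟩⟩⟩)

/-- Lifting a walk along an inclusion of hypergraphs. -/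
def Walk.lift {H1 H2 : HGraph V β} (hv : H1.verts ⊆ H2.verts) (he : H1.edges ⊆ H2.edges)
    (hi : ∀ e ∈ H1.edges, H1.inc e ⊆ H2.inc e) : ∀ {u v : V}, H1.Walk u v → H2.Walk u v
  | _, _, .nil x hx => .nil x (hv hx)
  | _, _, .cons u a w e hee hu hvv hne p =>
      .cons u a w e (he hee) (hi e hee hu) (hi e hee hvv) hne (Walk.lift hv he hi p)

theorem Walk.steps_lift {H1 H2 : HGraph V β} (hv : H1.verts ⊆ H2.verts)
    (he : H1.edges ⊆ H2.edges) (hi : ∀ e ∈ H1.edges, H1.inc e ⊆ H2.inc e)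
    {u v : V} (w : H1.Walk u v) : (w.lift hv he hi).steps = w.steps := by
  induction w with
  | nil => rfl
  | cons u a w e hee hu hvv hne p ih => simp [Walk.lift, Walk.steps, ih]

theorem Walk.edgeList_lift {H1 H2 : HGraph V β} (hv : H1.verts ⊆ H2.verts)
    (he : H1.edges ⊆ H2.edges) (hi : ∀ e ∈ H1.edges, H1.inc e ⊆ H2.inc e)
    {u v : V} (w : H1.Walk u v) : (w.lift hv he hi).edgeList = w.edgeList := by
  simp [Walk.edgeList, Walk.steps_lift]

theorem Walk.anchors_lift {H1 H2 : HGraph V β} (hv : H1.verts ⊆ H2.verts)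
    (he : H1.edges ⊆ H2.edges) (hi : ∀ e ∈ H1.edges, H1.inc e ⊆ H2.inc e)
    {u v : V} (w : H1.Walk u v) : (w.lift hv he hi).anchors = w.anchors := by
  simp [Walk.anchors, Walk.steps_lift]

/-- Lifting a closed trail along an inclusion of hypergraphs. -/
def ClosedTrail.lift {H1 H2 : HGraph V β} (hv : H1.verts ⊆ H2.verts)
    (he : H1.edges ⊆ H2.edges) (hi : ∀ e ∈ H1.edges, H1.inc e ⊆ H2.inc e)
    (T : H1.ClosedTrail) : H2.ClosedTrail where
  base := T.base
  walk := T.walk.lift hv he hi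
  two_le := by rw [Walk.edgeList_lift]; exact T.two_le
  nodup := by rw [Walk.edgeList_lift]; exact T.nodup

end HGraph

namespace HGraph

section Aux

variable [DecidableEq V] [DecidableEq β]

/-- Concatenation of walks. -/
def Walk.append {H : HGraph V β} : ∀ {u v w : V}, H.Walk u v → H.Walk v w → H.Walk u w
  | _, _, _, .nil _ _, q => q
  | _, _, _, .cons u a _ e he hu hv hne p, q => .cons u a _ e he hu hv hne (append p q)

/-- Reversal of walks. -/
def Walk.reverse {H : HGraph V β} : ∀ {u v : V}, H.Walk u v → H.Walk v u
  | _, _, .nil x hx => .nil x hx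
  | _, _, .cons u a _ e he hu hv hne p =>
      Walk.append (reverse p)
        (.cons a u u e he hv hu (Ne.symm hne) (.nil u (H.inc_sub e he hu)))

/-- A walk from inside `S` to outside `S` crosses the cut at `S`. -/
theorem exists_cross {H : HGraph V β} (S : Finset V) :
    ∀ {a b : V}, H.Walk a b → a ∈ S → b ∉ S →
      ∃ e ∈ H.edges, (H.inc e ∩ S).Nonempty ∧ (H.inc e ∩ (H.verts \ S)).Nonempty := by
  intro a b w
  induction w with
  | nil x hx => intro h1 h2; exact absurd h1 h2
  | cons u x b e he hu hv hne p ih =>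
    intro hu' hb
    by_cases hx : x ∈ S
    · exact ih hx hb
    · exact ⟨e, he, ⟨u, Finset.mem_inter.mpr ⟨hu, hu'⟩⟩,
        ⟨x, Finset.mem_inter.mpr ⟨hv, Finset.mem_sdiff.mpr ⟨H.inc_sub e he hv, hx⟩⟩⟩⟩

/-- The set of vertices reachable from `v`. -/
noncomputable def reachSet (G : HGraph V β) (v : V) : Finset V :=
  @Finset.filter _ (fun u => Nonempty (G.Walk v u)) (Classical.decPred _) G.verts

theorem mem_reachSet {G : HGraph V β} {v u : V} :
    u ∈ G.reachSet v ↔ u ∈ G.verts ∧ Nonempty (G.Walk v u) := by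
  unfold reachSet; exact @Finset.mem_filter _ _ (Classical.decPred _) _ _

theorem reachSet_closed {G : HGraph V β} {v : V} {e : β} (he : e ∈ G.edges)
    (hne : (G.inc e ∩ G.reachSet v).Nonempty) : G.inc e ⊆ G.reachSet v := by
  obtain ⟨x, hx⟩ := hne
  rw [Finset.mem_inter] at hx
  obtain ⟨hxe, hxr⟩ := hx
  obtain ⟨hxv, ⟨p⟩⟩ := mem_reachSet.mp hxr
  intro y hy
  refine mem_reachSet.mpr ⟨G.inc_sub e he hy, ?_⟩
  by_cases hxy : x = y
  · exact ⟨hxy ▸ p⟩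
  · exact ⟨p.append (.cons x y y e he hxe hy hxy (.nil y (G.inc_sub e he hy)))⟩

theorem walk_induce {G : HGraph V β} {C : Finset V}
    (hC : ∀ e ∈ G.edges, (G.inc e ∩ C).Nonempty → G.inc e ⊆ C) :
    ∀ {u w : V}, G.Walk u w → u ∈ C → Nonempty ((G.induce C).Walk u w) := by
  intro u w p
  induction p with
  | nil x hx => intro hu; exact ⟨.nil x hu⟩
  | cons u a w e he hu hv hne p ih =>
    intro huC
    have hsub : G.inc e ⊆ C := hC e he ⟨u, Finset.mem_inter.mpr ⟨hu, huC⟩⟩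
    have haC : a ∈ C := hsub hv
    obtain ⟨q⟩ := ih haC
    refine ⟨.cons u a w e ?_ ?_ ?_ hne q⟩
    · exact Finset.mem_filter.mpr ⟨he, ⟨u, Finset.mem_inter.mpr ⟨hu, huC⟩⟩⟩
    · exact Finset.mem_inter.mpr ⟨hu, huC⟩
    · exact Finset.mem_inter.mpr ⟨hv, haC⟩

theorem isComponent_reachSet {G : HGraph V β} {v : V} (hv : v ∈ G.verts) :
    G.IsComponent (G.reachSet v) := by
  refine ⟨⟨v, mem_reachSet.mpr ⟨hv, ⟨.nil v hv⟩⟩⟩,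
    fun x hx => (mem_reachSet.mp hx).1, ?_, fun e he hne => reachSet_closed he hne⟩
  intro u hu w hw
  obtain ⟨huv, ⟨pu⟩⟩ := mem_reachSet.mp hu
  obtain ⟨hwv, ⟨pw⟩⟩ := mem_reachSet.mp hw
  exact walk_induce (fun e he hne => reachSet_closed he hne) (pu.reverse.append pw) hu

end Aux

end HGraph

open HGraph in
/-- Lemma 3.2: an edge cut `F` is minimal iff every edge of `F` intersects the vertex
set of each connected component of `H \ F`. -/
theorem isMinimalEdgeCut_iff_forall_component_intersects
    {V β : Type} [DecidableEq V] [DecidableEq β]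
    (H : HGraph V β) (F : Finset β) (hF : H.IsEdgeCut F) :
    H.IsMinimalEdgeCut F ↔
      ∀ f ∈ F, ∀ C : Finset V, (H.edel F).IsComponent C → (H.inc f ∩ C).Nonempty := by
  constructor
  · rintro ⟨-, hmin⟩ f hf C hC
    by_contra hempty
    have hfC : H.inc f ∩ C = ∅ := Finset.not_nonempty_iff_eq_empty.mp hempty
    obtain ⟨S, hSsub, hSne, hSneq, hFS⟩ := hF
    have hfmem := Finset.mem_filter.mp (hFS ▸ hf)
    have hfe : f ∈ H.edges := hfmem.1
    obtain ⟨x, hx⟩ := hfmem.2.1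
    rw [Finset.mem_inter] at hx
    have hxv : x ∈ H.verts := H.inc_sub f hfe hx.1
    have hxC : x ∉ C := by
      intro hmem
      have : x ∈ H.inc f ∩ C := Finset.mem_inter.mpr ⟨hx.1, hmem⟩
      simp [hfC] at this
    refine hmin (H.cutSet C) ?_ ⟨C, hC.2.1, hC.1, fun h => hxC (h ▸ hxv), rfl⟩
    rw [Finset.ssubset_def]
    constructor
    · intro e he'
      have he'' := Finset.mem_filter.mp he'
      obtain ⟨hee, ⟨a, ha⟩, ⟨b, hb⟩⟩ := he''
      by_contra heF
      have heF' : e ∈ (H.edel F).edges := Finset.mem_sdiff.mpr ⟨hee, heF⟩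
      have hsub : H.inc e ⊆ C := hC.2.2.2 e heF' ⟨a, ha⟩
      rw [Finset.mem_inter, Finset.mem_sdiff] at hb
      exact hb.2.2 (hsub hb.1)
    · intro hsup
      have := Finset.mem_filter.mp (hsup hf)
      obtain ⟨-, ⟨y, hy⟩, -⟩ := this
      exact hempty ⟨y, hy⟩
  · intro h
    refine ⟨hF, ?_⟩
    rintro F' hlt ⟨S', hS'sub, hS'ne, hS'neq, rfl⟩
    obtain ⟨f, hfF, hfnot⟩ := Finset.exists_of_ssubset hlt
    obtain ⟨S, hSsub, hSne, hSneq, hFS⟩ := hF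
    have hfe : f ∈ H.edges := (Finset.mem_filter.mp (hFS ▸ hfF)).1
    have hnot : ¬((H.inc f ∩ S').Nonempty ∧ (H.inc f ∩ (H.verts \ S')).Nonempty) := by
      intro hp
      exact hfnot (Finset.mem_filter.mpr ⟨hfe, hp⟩)
    have hltsub : H.cutSet S' ⊆ F := (Finset.ssubset_def.mp hlt).1
    by_cases hA : (H.inc f ∩ S').Nonempty
    · have hB : ¬(H.inc f ∩ (H.verts \ S')).Nonempty := fun hb => hnot ⟨hA, hb⟩
      have hsub : H.inc f ⊆ S' := by
        intro x hx
        by_contra hxS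
        exact hB ⟨x, Finset.mem_inter.mpr ⟨hx,
          Finset.mem_sdiff.mpr ⟨H.inc_sub f hfe hx, hxS⟩⟩⟩
      obtain ⟨v, hvV, hvS⟩ := Finset.exists_of_ssubset (hS'sub.ssubset_of_ne hS'neq)
      have hC := isComponent_reachSet (G := H.edel F) (v := v) hvV
      obtain ⟨u, hu⟩ := h f hfF _ hC
      rw [Finset.mem_inter] at hu
      obtain ⟨-, ⟨pu⟩⟩ := mem_reachSet.mp hu.2
      obtain ⟨e, hee, h1, h2⟩ := exists_cross S' pu.reverse (hsub hu.1) hvS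
      have heF : e ∉ F := (Finset.mem_sdiff.mp hee).2
      exact heF (hltsub (Finset.mem_filter.mpr ⟨(Finset.mem_sdiff.mp hee).1, h1, h2⟩))
    · have hsub : ∀ x ∈ H.inc f, x ∉ S' :=
        fun x hx hxS => hA ⟨x, Finset.mem_inter.mpr ⟨hx, hxS⟩⟩
      obtain ⟨v, hvS⟩ := hS'ne
      have hvV := hS'sub hvS
      have hC := isComponent_reachSet (G := H.edel F) (v := v) hvV
      obtain ⟨u, hu⟩ := h f hfF _ hC
      rw [Finset.mem_inter] at hu
      obtain ⟨-, ⟨pu⟩⟩ := mem_reachSet.mp hu.2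
      obtain ⟨e, hee, h1, h2⟩ := exists_cross S' pu hvS (hsub u hu.1)
      have heF : e ∉ F := (Finset.mem_sdiff.mp hee).2
      exact heF (hltsub (Finset.mem_filter.mpr ⟨(Finset.mem_sdiff.mp hee).1, h1, h2⟩))
end

section
/- Let H1 and H2 be hypergraphs with V(H1) ⊆ V(H2) and suppose there is a bijection φ: E(H1) → E(H2) with e ⊆ φ(e) for all edges e of H1. If H1 has an Euler family, then H2 has an Euler family, obtained by replacing each edge e in the trails by φ(e). -/
set_option linter.unusedSectionVars false

universe u

variable {V : Type u} {β : Type u} {I : Type u}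

/-- A hypergraph on vertex type `V` with edge-index type `β`: a finite vertex set,
a finite (multi)set of edges indexed by `β`, and an incidence map giving the
vertex set of each edge. -/
structure Hypergraph' (V β : Type u) [DecidableEq V] where
  verts : Finset V
  edges : Finset β
  inc : β → Finset V
  inc_sub : ∀ e ∈ edges, inc e ⊆ verts

namespace Hypergraph'

variable [DecidableEq V] [DecidableEq β] [DecidableEq I]

/-- A walk in a hypergraph: an alternating sequence of vertices and edges,
consecutive vertices being distinct and both contained in the intervening edge. -/
inductive Walk (H : Hypergraph' V β) : V → V → Type u where
  | nil (v : V) (hv : v ∈ H.verts) : Walk H v v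
  | cons (u v w : V) (e : β) (he : e ∈ H.edges) (hu : u ∈ H.inc e) (hv : v ∈ H.inc e)
      (hne : u ≠ v) (p : Walk H v w) : Walk H u w

namespace Walk

/-- The list of steps `(v_{i-1}, e_i, v_i)` of a walk. -/
def steps {H : Hypergraph' V β} : ∀ {u v : V}, H.Walk u v → List (V × β × V)
  | _, _, .nil _ _ => []
  | _, _, .cons u a _ e _ _ _ _ p => (u, e, a) :: p.steps

/-- The list of edges traversed by a walk, in order. -/
def edgeList {H : Hypergraph' V β} {u v : V} (w : H.Walk u v) : List β :=
  w.steps.map (fun s => s.2.1)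

/-- The anchors of a walk: the vertices appearing in its sequence. -/
def anchors {H : Hypergraph' V β} {u v : V} (w : H.Walk u v) : List V :=
  u :: w.steps.map (fun s => s.2.2)

end Walk

/-- A closed trail: a closed walk of length at least 2 with pairwise distinct edges. -/
structure ClosedTrail (H : Hypergraph' V β) where
  base : V
  walk : H.Walk base base
  two_le : 2 ≤ walk.edgeList.length
  nodup : walk.edgeList.Nodup

/-- The closed trail `T` traverses the vertex `u` via the edge `e`, i.e. `eu` or `ue`
is a subsequence of the walk. -/
def ClosedTrail.traverses {H : Hypergraph' V β} (T : H.ClosedTrail) (u : V) (e : β) : Prop :=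
  ∃ s ∈ T.walk.steps, s.2.1 = e ∧ (s.1 = u ∨ s.2.2 = u)

/-- An Euler family: a family of pairwise edge-disjoint and anchor-disjoint closed
trails jointly traversing every edge exactly once. -/
def IsEulerFamily (H : Hypergraph' V β) {κ : Type} (T : κ → H.ClosedTrail) : Prop :=
  (∀ k l, k ≠ l → ∀ e, e ∈ (T k).walk.edgeList → e ∉ (T l).walk.edgeList) ∧
  (∀ k l, k ≠ l → ∀ v, v ∈ (T k).walk.anchors → v ∉ (T l).walk.anchors) ∧
  (∀ e ∈ H.edges, ∃ k, e ∈ (T k).walk.edgeList)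

def HasEulerFamily (H : Hypergraph' V β) : Prop :=
  ∃ (κ : Type) (T : κ → H.ClosedTrail), H.IsEulerFamily T

/-- A non-empty Euler family. -/
def HasNonemptyEulerFamily (H : Hypergraph' V β) : Prop :=
  ∃ (κ : Type) (T : κ → H.ClosedTrail), Nonempty κ ∧ H.IsEulerFamily T

/-- An Euler family is spanning if every vertex is an anchor of some trail in it. -/
def IsSpanningFamily (H : Hypergraph' V β) {κ : Type} (T : κ → H.ClosedTrail) : Prop :=
  ∀ v ∈ H.verts, ∃ k, v ∈ (T k).walk.anchors

/-- An Euler tour: a closed trail traversing every edge (exactly once). -/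
def IsEulerTour (H : Hypergraph' V β) (T : H.ClosedTrail) : Prop :=
  ∀ e ∈ H.edges, e ∈ T.walk.edgeList

def HasEulerTour (H : Hypergraph' V β) : Prop := ∃ T : H.ClosedTrail, H.IsEulerTour T

/-- A hypergraph is connected if every two vertices are joined by a walk. -/
def Connected (H : Hypergraph' V β) : Prop :=
  ∀ u ∈ H.verts, ∀ v ∈ H.verts, Nonempty (H.Walk u v)

/-- `H \ F` : deletion of the edges in `F`. -/
def edel (H : Hypergraph' V β) (F : Finset β) : Hypergraph' V β where
  verts := H.verts
  edges := H.edges \ F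
  inc := H.inc
  inc_sub := fun e he => H.inc_sub e (Finset.mem_sdiff.mp he).1

/-- The subhypergraph induced by a vertex set `U`. -/
def induce (H : Hypergraph' V β) (U : Finset V) : Hypergraph' V β where
  verts := U
  edges := H.edges.filter (fun e => (H.inc e ∩ U).Nonempty)
  inc := fun e => H.inc e ∩ U
  inc_sub := fun _ _ => Finset.inter_subset_right

/-- The degree of a vertex: the number of edges incident with it. -/
def degree (H : Hypergraph' V β) (v : V) : ℕ :=
  (H.edges.filter (fun e => v ∈ H.inc e)).card

/-- `[S, V - S]_H` : the set of edges meeting both `S` and its complement. -/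
def cutSet (H : Hypergraph' V β) (S : Finset V) : Finset β :=
  H.edges.filter (fun e => (H.inc e ∩ S).Nonempty ∧ (H.inc e ∩ (H.verts \ S)).Nonempty)

/-- An edge cut: a set of edges of the form `[S, V - S]_H` for nonempty proper `S`. -/
def IsEdgeCut (H : Hypergraph' V β) (F : Finset β) : Prop :=
  ∃ S : Finset V, S ⊆ H.verts ∧ S.Nonempty ∧ S ≠ H.verts ∧ F = H.cutSet S

/-- A minimal edge cut: an edge cut no proper subset of which is an edge cut. -/
def IsMinimalEdgeCut (H : Hypergraph' V β) (F : Finset β) : Prop :=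
  H.IsEdgeCut F ∧ ∀ F' ⊂ F, ¬ H.IsEdgeCut F'

/-- `C` is the vertex set of a connected component of `H` : nonempty, connected as an
induced subhypergraph, and closed under the edges of `H`. -/
def IsComponent (H : Hypergraph' V β) (C : Finset V) : Prop :=
  C.Nonempty ∧ C ⊆ H.verts ∧ (H.induce C).Connected ∧
    ∀ e ∈ H.edges, (H.inc e ∩ C).Nonempty → H.inc e ⊆ C

/-- `P` is a partition of `V(H)` into unions of the vertex sets of the connected
components of `H \ F`. -/
def IsCompUnionPartition (H : Hypergraph' V β) (F : Finset β) (P : I → Finset V) : Prop :=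
  (∀ i, (P i).Nonempty) ∧ (∀ i, P i ⊆ H.verts) ∧ (∀ v ∈ H.verts, ∃! i, v ∈ P i) ∧
    ∀ e ∈ H.edges, e ∉ F → ∀ i, (H.inc e ∩ P i).Nonempty → H.inc e ⊆ P i

/-- `P` lists exactly the vertex sets of the connected components of `H \ F`. -/
def IsComponentPartition (H : Hypergraph' V β) (F : Finset β) (P : I → Finset V) : Prop :=
  H.IsCompUnionPartition F P ∧ ∀ i, ((H.edel F).induce (P i)).Connected

/-- The union `P i ∪ P j` associated with an unordered pair. -/
def pairFinset (P : I → Finset V) : Sym2 I → Finset V :=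
  Sym2.lift ⟨fun i j => P i ∪ P j, fun _ _ => Finset.union_comm _ _⟩

/-- `α : F → I^[2]` is an edge cut assignment. -/
def IsECA (H : Hypergraph' V β) (F : Finset β) (P : I → Finset V) (α : β → Sym2 I) : Prop :=
  ∀ f ∈ F, ∀ i j, α f = s(i, j) →
    (H.inc f ∩ P i).Nonempty ∧ (H.inc f ∩ P j).Nonempty ∧
      (i = j → 2 ≤ (H.inc f ∩ P i).card)

/-- The hypergraph `H^α` associated with an edge cut assignment `α`:
each `f ∈ F` is replaced by `f^α = f ∩ (V_i ∪ V_j)` where `α f = ij`. -/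
def assign (H : Hypergraph' V β) (F : Finset β) (P : I → Finset V) (α : β → Sym2 I) :
    Hypergraph' V β where
  verts := H.verts
  edges := H.edges
  inc := fun e => if e ∈ F then H.inc e ∩ pairFinset P (α e) else H.inc e
  inc_sub := by
    intro e he
    split
    · exact Finset.inter_subset_left.trans (H.inc_sub e he)
    · exact H.inc_sub e he

/-- The multigraph `G^α` associated with an edge cut assignment `α`, viewed as a
hypergraph on the vertex set `I` whose edges (indexed by `F`) are the pairs `α f`. -/
def assignGraph [Fintype I] (F : Finset β) (α : β → Sym2 I) : Hypergraph' I β where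
  verts := Finset.univ
  edges := F
  inc := fun f => Sym2.lift ⟨fun i j => ({i, j} : Finset I), fun _ _ => Finset.pair_comm _ _⟩ (α f)
  inc_sub := fun _ _ => fun _ _ => Finset.mem_univ _

/-- The collapsed hypergraph `H ∘ S` with collapsed vertex `uc`. -/
def collapse (H : Hypergraph' V β) (S : Finset V) (uc : V) : Hypergraph' V β where
  verts := (H.verts \ S) ∪ {uc}
  edges := H.edges.filter (fun e => (H.inc e ∩ (H.verts \ S)).Nonempty)
  inc := fun e => if (H.inc e ∩ S).Nonempty then (H.inc e \ S) ∪ {uc} else H.inc e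
  inc_sub := by
    intro e he
    rw [Finset.mem_filter] at he
    split
    · intro x hx
      rcases Finset.mem_union.mp hx with h | h
      · exact Finset.mem_union_left _
          (Finset.mem_sdiff.mpr ⟨H.inc_sub e he.1 (Finset.mem_sdiff.mp h).1,
            (Finset.mem_sdiff.mp h).2⟩)
      · exact Finset.mem_union_right _ h
    · intro x hx
      rename_i h
      exact Finset.mem_union_left _ (Finset.mem_sdiff.mpr
        ⟨H.inc_sub e he.1 hx, fun hxS => h ⟨x, Finset.mem_inter.mpr ⟨hx, hxS⟩⟩⟩)

/-- Lifting a walk along an inclusion of hypergraphs. -/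
def Walk.lift {H1 H2 : Hypergraph' V β} (hv : H1.verts ⊆ H2.verts) (he : H1.edges ⊆ H2.edges)
    (hi : ∀ e ∈ H1.edges, H1.inc e ⊆ H2.inc e) : ∀ {u v : V}, H1.Walk u v → H2.Walk u v
  | _, _, .nil x hx => .nil x (hv hx)
  | _, _, .cons u a w e hee hu hvv hne p =>
      .cons u a w e (he hee) (hi e hee hu) (hi e hee hvv) hne (Walk.lift hv he hi p)

theorem Walk.steps_lift {H1 H2 : Hypergraph' V β} (hv : H1.verts ⊆ H2.verts)
    (he : H1.edges ⊆ H2.edges) (hi : ∀ e ∈ H1.edges, H1.inc e ⊆ H2.inc e)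
    {u v : V} (w : H1.Walk u v) : (w.lift hv he hi).steps = w.steps := by
  induction w with
  | nil => rfl
  | cons u a w e hee hu hvv hne p ih => simp [Walk.lift, Walk.steps, ih]

theorem Walk.edgeList_lift {H1 H2 : Hypergraph' V β} (hv : H1.verts ⊆ H2.verts)
    (he : H1.edges ⊆ H2.edges) (hi : ∀ e ∈ H1.edges, H1.inc e ⊆ H2.inc e)
    {u v : V} (w : H1.Walk u v) : (w.lift hv he hi).edgeList = w.edgeList := by
  simp [Walk.edgeList, Walk.steps_lift]

theorem Walk.anchors_lift {H1 H2 : Hypergraph' V β} (hv : H1.verts ⊆ H2.verts)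
    (he : H1.edges ⊆ H2.edges) (hi : ∀ e ∈ H1.edges, H1.inc e ⊆ H2.inc e)
    {u v : V} (w : H1.Walk u v) : (w.lift hv he hi).anchors = w.anchors := by
  simp [Walk.anchors, Walk.steps_lift]

/-- Lifting a closed trail along an inclusion of hypergraphs. -/
def ClosedTrail.lift {H1 H2 : Hypergraph' V β} (hv : H1.verts ⊆ H2.verts)
    (he : H1.edges ⊆ H2.edges) (hi : ∀ e ∈ H1.edges, H1.inc e ⊆ H2.inc e)
    (T : H1.ClosedTrail) : H2.ClosedTrail where
  base := T.base
  walk := T.walk.lift hv he hi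
  two_le := by rw [Walk.edgeList_lift]; exact T.two_le
  nodup := by rw [Walk.edgeList_lift]; exact T.nodup

/-- Mapping a walk by replacing each edge `e` with `φ e`. -/
def Walk.mapEdges {H1 H2 : Hypergraph' V β} (φ : β → β)
    (hv : H1.verts ⊆ H2.verts)
    (he : ∀ e ∈ H1.edges, φ e ∈ H2.edges)
    (hi : ∀ e ∈ H1.edges, H1.inc e ⊆ H2.inc (φ e)) :
    ∀ {u v : V}, H1.Walk u v → H2.Walk u v
  | _, _, .nil x hx => .nil x (hv hx)
  | _, _, .cons u a w e hee hu hvv hne p =>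
      .cons u a w (φ e) (he e hee) (hi e hee hu) (hi e hee hvv) hne (mapEdges φ hv he hi p)

theorem Walk.steps_mapEdges {H1 H2 : Hypergraph' V β} (φ : β → β)
    (hv : H1.verts ⊆ H2.verts) (he : ∀ e ∈ H1.edges, φ e ∈ H2.edges)
    (hi : ∀ e ∈ H1.edges, H1.inc e ⊆ H2.inc (φ e))
    {u v : V} (w : H1.Walk u v) :
    (w.mapEdges φ hv he hi).steps = w.steps.map (fun s => (s.1, φ s.2.1, s.2.2)) := by
  induction w with
  | nil => rfl
  | cons u a w e hee hu hvv hne p ih => simp [Walk.mapEdges, Walk.steps, ih]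

theorem Walk.edgeList_mapEdges {H1 H2 : Hypergraph' V β} (φ : β → β)
    (hv : H1.verts ⊆ H2.verts) (he : ∀ e ∈ H1.edges, φ e ∈ H2.edges)
    (hi : ∀ e ∈ H1.edges, H1.inc e ⊆ H2.inc (φ e))
    {u v : V} (w : H1.Walk u v) :
    (w.mapEdges φ hv he hi).edgeList = w.edgeList.map φ := by
  simp [Walk.edgeList, Walk.steps_mapEdges]

theorem Walk.anchors_mapEdges {H1 H2 : Hypergraph' V β} (φ : β → β)
    (hv : H1.verts ⊆ H2.verts) (he : ∀ e ∈ H1.edges, φ e ∈ H2.edges)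
    (hi : ∀ e ∈ H1.edges, H1.inc e ⊆ H2.inc (φ e))
    {u v : V} (w : H1.Walk u v) :
    (w.mapEdges φ hv he hi).anchors = w.anchors := by
  simp [Walk.anchors, Walk.steps_mapEdges]

theorem Walk.edgeList_mem_edges {H : Hypergraph' V β} {u v : V} (w : H.Walk u v) :
    ∀ e ∈ w.edgeList, e ∈ H.edges := by
  induction w with
  | nil => simp [Walk.edgeList, Walk.steps]
  | cons u a w e hee hu hvv hne p ih =>
    intro f hf
    rcases List.mem_cons.mp hf with h | h
    · exact h ▸ hee
    · exact ih f h

end Hypergraph'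
open Hypergraph' in
/-- Lemma 2.2(i): if `V(H1) ⊆ V(H2)` and there is a bijection `φ : E(H1) → E(H2)` with
`e ⊆ φ(e)`, then an Euler family of `H1` yields an Euler family of `H2` obtained by
replacing each edge `e` with `φ(e)`. -/
theorem eulerFamily_map_of_edge_bijection
    {V β : Type} [DecidableEq V] [DecidableEq β]
    (H1 H2 : Hypergraph' V β) (φ : β → β)
    (hverts : H1.verts ⊆ H2.verts)
    (hbij : Set.BijOn φ ↑H1.edges ↑H2.edges)
    (hsub : ∀ e ∈ H1.edges, H1.inc e ⊆ H2.inc (φ e))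
    {κ : Type} (T1 : κ → H1.ClosedTrail) (h1 : H1.IsEulerFamily T1) :
    ∃ T2 : κ → H2.ClosedTrail, H2.IsEulerFamily T2 ∧
      ∀ k, (T2 k).walk.anchors = (T1 k).walk.anchors ∧
        (T2 k).walk.edgeList = (T1 k).walk.edgeList.map φ := by
  have hφe : ∀ e ∈ H1.edges, φ e ∈ H2.edges := fun e he => hbij.mapsTo he
  obtain ⟨hdisj, hanch, hcov⟩ := h1
  refine ⟨fun k => ⟨(T1 k).base, (T1 k).walk.mapEdges φ hverts hφe hsub, ?_, ?_⟩, ?_, ?_⟩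
  · rw [Walk.edgeList_mapEdges, List.length_map]; exact (T1 k).two_le
  · rw [Walk.edgeList_mapEdges]
    refine List.Nodup.map_on ?_ (T1 k).nodup
    intro x hx y hy hxy
    exact hbij.injOn ((T1 k).walk.edgeList_mem_edges x hx)
      ((T1 k).walk.edgeList_mem_edges y hy) hxy
  · refine ⟨?_, ?_, ?_⟩
    · intro k l hkl e hek hel
      simp only [Walk.edgeList_mapEdges, List.mem_map] at hek hel
      obtain ⟨f, hf, rfl⟩ := hek
      obtain ⟨g, hg, hgf⟩ := hel
      have : g = f := hbij.injOn ((T1 l).walk.edgeList_mem_edges g hg)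
        ((T1 k).walk.edgeList_mem_edges f hf) hgf
      exact hdisj k l hkl f hf (this ▸ hg)
    · intro k l hkl v
      simp only [Walk.anchors_mapEdges]
      exact hanch k l hkl v
    · intro e he
      obtain ⟨f, hf, rfl⟩ := hbij.surjOn he
      obtain ⟨k, hk⟩ := hcov f hf
      exact ⟨k, by simp only [Walk.edgeList_mapEdges, List.mem_map]; exact ⟨f, hk, rfl⟩⟩
  · intro k
    exact ⟨Walk.anchors_mapEdges _ _ _ _ _, Walk.edgeList_mapEdges _ _ _ _ _⟩
end

section
/- Let H be a connected hypergraph with minimal edge cut F and {V_i : i ∈ I} a partition of V(H) into unions of vertex sets of connected components of H \ F. If for some edge cut assignment α: F → I^[2] the associated hypergraph H^α has an Euler family F^α, then H has an Euler family, obtained from F^α by replacing each edge f^α (f ∈ F) with f. -/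
set_option linter.unusedSectionVars false

universe u

variable {V : Type u} {β : Type u} {I : Type u}

open HGraph in
/-- Lemma 4.3(ii): if `H^α` has an Euler family for some edge cut assignment `α`, then
`H` has an Euler family obtained by replacing each `f^α` with `f`. -/
theorem hasEulerFamily_of_assign_eulerFamily
    {V β I : Type} [DecidableEq V] [DecidableEq β] [DecidableEq I]
    (H : HGraph V β) (F : Finset β) (P : I → Finset V)
    (hH : H.Connected) (hF : H.IsMinimalEdgeCut F)
    (hP : H.IsCompUnionPartition F P)
    (α : β → Sym2 I) (hα : H.IsECA F P α)
    {κ : Type} (T' : κ → (H.assign F P α).ClosedTrail)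
    (hT' : (H.assign F P α).IsEulerFamily T') :
    ∃ T : κ → H.ClosedTrail, H.IsEulerFamily T ∧
      ∀ k, (T k).walk.anchors = (T' k).walk.anchors ∧
        (T k).walk.edgeList = (T' k).walk.edgeList := by
  have hv : (H.assign F P α).verts ⊆ H.verts := fun x hx => hx
  have he : (H.assign F P α).edges ⊆ H.edges := fun x hx => hx
  have hi : ∀ e ∈ (H.assign F P α).edges, (H.assign F P α).inc e ⊆ H.inc e := by
    intro e _
    simp only [HGraph.assign]
    split
    · exact Finset.inter_subset_left
    · exact fun x hx => hx
  refine ⟨fun k => (T' k).lift hv he hi, ⟨?_, ?_, ?_⟩, fun k => ?_⟩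
  · intro k l hkl e hk
    dsimp only [HGraph.ClosedTrail.lift] at hk ⊢
    rw [HGraph.Walk.edgeList_lift] at hk ⊢
    exact hT'.1 k l hkl e hk
  · intro k l hkl v hk
    dsimp only [HGraph.ClosedTrail.lift] at hk ⊢
    rw [HGraph.Walk.anchors_lift] at hk ⊢
    exact hT'.2.1 k l hkl v hk
  · intro e heE
    obtain ⟨k, hk⟩ := hT'.2.2 e heE
    exact ⟨k, by dsimp only [HGraph.ClosedTrail.lift]; rw [HGraph.Walk.edgeList_lift]; exact hk⟩
  · exact ⟨HGraph.Walk.anchors_lift hv he hi _, HGraph.Walk.edgeList_lift hv he hi _⟩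
end

section
/- Let H be a connected hypergraph with a cut edge f. Then H has no spanning Euler tour; moreover, if H has no vertex of degree 1, then H has no Euler tour at all. -/
set_option linter.unusedSectionVars false

universe u

variable {V : Type u} {β : Type u} {I : Type u}

section AuxCutEdge

open HGraph

variable {V β : Type} [DecidableEq V] [DecidableEq β] {H : HGraph V β}

lemma my_steps_valid : ∀ {u v : V} (w : H.Walk u v), ∀ s ∈ w.steps,
    s.2.1 ∈ H.edges ∧ s.1 ∈ H.inc s.2.1 ∧ s.2.2 ∈ H.inc s.2.1
  | _, _, .nil _ _ => by simp [Walk.steps]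
  | _, _, .cons u a w e he hu hv hne p => by
      intro s hs
      simp only [Walk.steps, List.mem_cons] at hs
      rcases hs with rfl | hs
      · exact ⟨he, hu, hv⟩
      · exact my_steps_valid p s hs

lemma my_anchors_cons {u a w : V} {e : β} {he : e ∈ H.edges} {hu : u ∈ H.inc e}
    {hv : a ∈ H.inc e} {hne : u ≠ a} {p : H.Walk a w} :
    (Walk.cons u a w e he hu hv hne p).anchors = u :: p.anchors := by
  simp [Walk.anchors, Walk.steps]

lemma my_endpoints_anchors : ∀ {u v : V} (w : H.Walk u v), ∀ s ∈ w.steps,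
    s.1 ∈ w.anchors ∧ s.2.2 ∈ w.anchors
  | _, _, .nil _ _ => by simp [Walk.steps]
  | _, _, .cons u a w e he hu hv hne p => by
      intro s hs
      rw [my_anchors_cons]
      simp only [Walk.steps, List.mem_cons] at hs
      rcases hs with rfl | hs
      · refine ⟨List.mem_cons_self, List.mem_cons_of_mem _ ?_⟩
        simp [Walk.anchors]
      · have := my_endpoints_anchors p s hs
        exact ⟨List.mem_cons_of_mem _ this.1, List.mem_cons_of_mem _ this.2⟩

/-- Whether a step crosses the cut determined by `S`. -/
def crossB (S : Finset V) (s : V × β × V) : Bool := !(decide (s.1 ∈ S ↔ s.2.2 ∈ S))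

lemma my_cross_parity (S : Finset V) : ∀ {u v : V} (w : H.Walk u v),
    ((u ∈ S) ↔ (v ∈ S)) ↔ Even (w.steps.countP (crossB S))
  | _, _, .nil _ _ => by simp [Walk.steps]
  | _, _, .cons u a w e he hu hv hne p => by
      have ih := my_cross_parity S p
      simp only [Walk.steps, List.countP_cons]
      by_cases h : (u ∈ S) ↔ (a ∈ S)
      · have hc : crossB S (u, e, a) = false := by simp [crossB]; tauto
        simp only [hc]
        simp only [Bool.false_eq_true, if_false, Nat.add_zero]
        rw [← ih]
        tauto
      · have hc : crossB S (u, e, a) = true := by simp [crossB]; tauto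
        simp only [hc, if_true]
        rw [Nat.even_add_one, ← ih]
        tauto

lemma my_anchors_side (S : Finset V) : ∀ {u v : V} (w : H.Walk u v),
    (∀ s ∈ w.steps, crossB S s = false) → ∀ a ∈ w.anchors, ((a ∈ S) ↔ (u ∈ S))
  | _, _, .nil _ _ => by
      intro _ a ha
      simp [Walk.anchors, Walk.steps] at ha
      simp [ha]
  | _, _, .cons u a w e he hu hv hne p => by
      intro hno x hx
      have h1 : crossB S (u, e, a) = false := hno _ (by simp [Walk.steps])
      have hua : (u ∈ S) ↔ (a ∈ S) := by
        simp [crossB] at h1; tauto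
      rw [my_anchors_cons] at hx
      rcases List.mem_cons.mp hx with rfl | hx
      · tauto
      · have := my_anchors_side S p (fun s hs => hno s (by simp [Walk.steps, hs])) x hx
        tauto

lemma my_mem_cutSet {S : Finset V} {e : β} {x y : V}
    (he : e ∈ H.edges) (hx : x ∈ H.inc e) (hy : y ∈ H.inc e)
    (h : ¬ ((x ∈ S) ↔ (y ∈ S))) : e ∈ H.cutSet S := by
  rw [cutSet, Finset.mem_filter]
  have hxV : x ∈ H.verts := H.inc_sub e he hx
  have hyV : y ∈ H.verts := H.inc_sub e he hy
  refine ⟨he, ?_⟩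
  by_cases hxS : x ∈ S
  · have hyS : y ∉ S := by tauto
    exact ⟨⟨x, Finset.mem_inter.mpr ⟨hx, hxS⟩⟩,
      ⟨y, Finset.mem_inter.mpr ⟨hy, Finset.mem_sdiff.mpr ⟨hyV, hyS⟩⟩⟩⟩
  · have hyS : y ∈ S := by tauto
    exact ⟨⟨y, Finset.mem_inter.mpr ⟨hy, hyS⟩⟩,
      ⟨x, Finset.mem_inter.mpr ⟨hx, Finset.mem_sdiff.mpr ⟨hxV, hxS⟩⟩⟩⟩

lemma my_len_le_one {α : Type} {l : List α} {c : α} (hn : l.Nodup) (h : ∀ x ∈ l, x = c) :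
    l.length ≤ 1 := by
  match l with
  | [] => simp
  | [a] => simp
  | a :: b :: t =>
    exfalso
    have ha := h a (by simp)
    have hb := h b (by simp)
    subst ha
    rw [hb] at hn
    simp at hn

end AuxCutEdge

open HGraph in
/-- Corollary 5.4(iii),(iv): a connected hypergraph with a cut edge has no spanning Euler
tour; and if it has no vertex of degree 1, it has no Euler tour at all. -/
theorem no_eulerTour_of_cut_edge
    {V β : Type} [DecidableEq V] [DecidableEq β]
    (H : HGraph V β) (f : β)
    (hH : H.Connected) (hf : H.IsEdgeCut {f}) :
    (¬ ∃ T : H.ClosedTrail, H.IsEulerTour T ∧ ∀ v ∈ H.verts, v ∈ T.walk.anchors) ∧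
    ((∀ v ∈ H.verts, H.degree v ≠ 1) → ¬ H.HasEulerTour) := by

  obtain ⟨S, hSsub, hSne, hSneV, hcutS⟩ := hf
  have hfcut : f ∈ H.cutSet S := by rw [← hcutS]; simp
  rw [HGraph.cutSet, Finset.mem_filter] at hfcut
  obtain ⟨hfE, hfS, hfS'⟩ := hfcut
  -- key: every Euler tour has all its anchors on the same side as its base
  have key : ∀ T : H.ClosedTrail, H.IsEulerTour T →
      ∀ a ∈ T.walk.anchors, ((a ∈ S) ↔ (T.base ∈ S)) := by
    intro T hT
    have hpar : Even (T.walk.steps.countP (crossB S)) :=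
      (my_cross_parity S T.walk).mp Iff.rfl
    have hsubl : ((T.walk.steps.filter (crossB S)).map (fun s => s.2.1)).Sublist
        T.walk.edgeList :=
      List.Sublist.map _ List.filter_sublist
    have hnd : ((T.walk.steps.filter (crossB S)).map (fun s => s.2.1)).Nodup :=
      hsubl.nodup T.nodup
    have hallf : ∀ x ∈ (T.walk.steps.filter (crossB S)).map (fun s => s.2.1), x = f := by
      intro x hx
      obtain ⟨s, hs, rfl⟩ := List.mem_map.mp hx
      obtain ⟨hs1, hs2⟩ := List.mem_filter.mp hs
      obtain ⟨heE, hx1, hx2⟩ := my_steps_valid T.walk s hs1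
      have hcr : ¬ ((s.1 ∈ S) ↔ (s.2.2 ∈ S)) := by
        simp [crossB] at hs2; tauto
      have : s.2.1 ∈ H.cutSet S := my_mem_cutSet heE hx1 hx2 hcr
      rw [← hcutS] at this
      simpa using this
    have hle : T.walk.steps.countP (crossB S) ≤ 1 := by
      rw [List.countP_eq_length_filter]
      have := my_len_le_one hnd hallf
      simpa using this
    have hzero : T.walk.steps.countP (crossB S) = 0 := by
      rcases Nat.le_one_iff_eq_zero_or_eq_one.mp hle with h | h
      · exact h
      · rw [h] at hpar; simp at hpar
    have hnone : ∀ s ∈ T.walk.steps, crossB S s = false := by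
      intro s hs
      have := List.countP_eq_zero.mp hzero s hs
      simpa using this
    exact my_anchors_side S T.walk hnone
  constructor
  · rintro ⟨T, hT, hspan⟩
    have hall := key T hT
    obtain ⟨x, hxS⟩ := hSne
    have hSlt : S ⊂ H.verts := lt_of_le_of_ne hSsub hSneV
    obtain ⟨y, hyV, hyS⟩ := Finset.exists_of_ssubset hSlt
    have hx := hall x (hspan x (hSsub hxS))
    have hy := hall y (hspan y hyV)
    tauto
  · rintro hdeg ⟨T, hT⟩
    have hall := key T hT
    -- f is traversed; its step endpoints are anchors, hence on base's side
    have hfL : f ∈ T.walk.edgeList := hT f hfE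
    obtain ⟨s, hs, hsf⟩ := List.mem_map.mp hfL
    have hs1anch := (my_endpoints_anchors T.walk s hs).1
    have hs1side := hall s.1 hs1anch
    have hs1inc : s.1 ∈ H.inc f := by
      have := (my_steps_valid T.walk s hs).2.1; rwa [hsf] at this
    -- pick x in inc f on the side opposite to the base
    obtain ⟨x, hxinc, hxV, hxside⟩ :
        ∃ x, x ∈ H.inc f ∧ x ∈ H.verts ∧ ¬ ((x ∈ S) ↔ (T.base ∈ S)) := by
      by_cases hb : T.base ∈ S
      · obtain ⟨x, hx⟩ := hfS'
        rw [Finset.mem_inter, Finset.mem_sdiff] at hx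
        exact ⟨x, hx.1, hx.2.1, by tauto⟩
      · obtain ⟨x, hx⟩ := hfS
        rw [Finset.mem_inter] at hx
        exact ⟨x, hx.1, hSsub hx.2, by tauto⟩
    -- x has degree ≥ 2, so there is an edge e ≠ f containing x
    have hx_in : f ∈ H.edges.filter (fun e => x ∈ H.inc e) :=
      Finset.mem_filter.mpr ⟨hfE, hxinc⟩
    have hcard : 1 < (H.edges.filter (fun e => x ∈ H.inc e)).card := by
      have h1 : 1 ≤ (H.edges.filter (fun e => x ∈ H.inc e)).card :=
        Finset.card_pos.mpr ⟨f, hx_in⟩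
      have h2 := hdeg x hxV
      rw [HGraph.degree] at h2
      omega
    obtain ⟨a, ha, b, hb, hab⟩ := Finset.one_lt_card.mp hcard
    obtain ⟨e, he, hef⟩ : ∃ e ∈ H.edges.filter (fun e => x ∈ H.inc e), e ≠ f := by
      by_cases haf : a = f
      · exact ⟨b, hb, by rw [← haf]; exact fun h => hab h.symm⟩
      · exact ⟨a, ha, haf⟩
    obtain ⟨heE, hxe⟩ := Finset.mem_filter.mp he
    -- e is traversed; its step endpoint is an anchor in inc e on the base's side
    obtain ⟨t, ht, hte⟩ := List.mem_map.mp (hT e heE)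
    have ht1anch := (my_endpoints_anchors T.walk t ht).1
    have ht1side := hall t.1 ht1anch
    have ht1inc : t.1 ∈ H.inc e := by
      have := (my_steps_valid T.walk t ht).2.1; rwa [hte] at this
    -- but then e meets both sides, so e ∈ cutSet S = {f}, contradiction
    have : e ∈ H.cutSet S := my_mem_cutSet heE hxe ht1inc (by tauto)
    rw [← hcutS] at this
    simp at this
    exact hef this
end

section
/- Let H be a hypergraph, u a vertex of H, and F a set of edges of H each incident with u. Construct H' from H by, for each f ∈ F, adjoining a new vertex u_f and replacing f with the two edges f' = (f − {u}) ∪ {u_f} and e_f = {u_f, u}. Then H has an Euler family traversing the vertex u via each edge of F if and only if H' has an Euler family; the same equivalence holds for Euler tours. -/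
set_option linter.unusedSectionVars false

universe u

variable {V : Type u} {β : Type u} {I : Type u}

/-- A hypergraph on vertex type `V` with edge-index type `β`: a finite vertex set,
a finite (multi)set of edges indexed by `β`, and an incidence map giving the
vertex set of each edge. -/
structure EulerHypergraph (V β : Type u) [DecidableEq V] where
  verts : Finset V
  edges : Finset β
  inc : β → Finset V
  inc_sub : ∀ e ∈ edges, inc e ⊆ verts

namespace EulerHypergraph

variable [DecidableEq V] [DecidableEq β] [DecidableEq I]

/-- A walk in a hypergraph: an alternating sequence of vertices and edges,
consecutive vertices being distinct and both contained in the intervening edge. -/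
inductive Walk (H : EulerHypergraph V β) : V → V → Type u where
  | nil (v : V) (hv : v ∈ H.verts) : Walk H v v
  | cons (u v w : V) (e : β) (he : e ∈ H.edges) (hu : u ∈ H.inc e) (hv : v ∈ H.inc e)
      (hne : u ≠ v) (p : Walk H v w) : Walk H u w

namespace Walk

/-- The list of steps `(v_{i-1}, e_i, v_i)` of a walk. -/
def steps {H : EulerHypergraph V β} : ∀ {u v : V}, H.Walk u v → List (V × β × V)
  | _, _, .nil _ _ => []
  | _, _, .cons u a _ e _ _ _ _ p => (u, e, a) :: p.steps

/-- The list of edges traversed by a walk, in order. -/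
def edgeList {H : EulerHypergraph V β} {u v : V} (w : H.Walk u v) : List β :=
  w.steps.map (fun s => s.2.1)

/-- The anchors of a walk: the vertices appearing in its sequence. -/
def anchors {H : EulerHypergraph V β} {u v : V} (w : H.Walk u v) : List V :=
  u :: w.steps.map (fun s => s.2.2)

end Walk

/-- A closed trail: a closed walk of length at least 2 with pairwise distinct edges. -/
structure ClosedTrail (H : EulerHypergraph V β) where
  base : V
  walk : H.Walk base base
  two_le : 2 ≤ walk.edgeList.length
  nodup : walk.edgeList.Nodup

/-- The closed trail `T` traverses the vertex `u` via the edge `e`, i.e. `eu` or `ue`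
is a subsequence of the walk. -/
def ClosedTrail.traverses {H : EulerHypergraph V β} (T : H.ClosedTrail) (u : V) (e : β) : Prop :=
  ∃ s ∈ T.walk.steps, s.2.1 = e ∧ (s.1 = u ∨ s.2.2 = u)

/-- An Euler family: a family of pairwise edge-disjoint and anchor-disjoint closed
trails jointly traversing every edge exactly once. -/
def IsEulerFamily (H : EulerHypergraph V β) {κ : Type} (T : κ → H.ClosedTrail) : Prop :=
  (∀ k l, k ≠ l → ∀ e, e ∈ (T k).walk.edgeList → e ∉ (T l).walk.edgeList) ∧
  (∀ k l, k ≠ l → ∀ v, v ∈ (T k).walk.anchors → v ∉ (T l).walk.anchors) ∧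
  (∀ e ∈ H.edges, ∃ k, e ∈ (T k).walk.edgeList)

def HasEulerFamily (H : EulerHypergraph V β) : Prop :=
  ∃ (κ : Type) (T : κ → H.ClosedTrail), H.IsEulerFamily T

/-- A non-empty Euler family. -/
def HasNonemptyEulerFamily (H : EulerHypergraph V β) : Prop :=
  ∃ (κ : Type) (T : κ → H.ClosedTrail), Nonempty κ ∧ H.IsEulerFamily T

/-- An Euler family is spanning if every vertex is an anchor of some trail in it. -/
def IsSpanningFamily (H : EulerHypergraph V β) {κ : Type} (T : κ → H.ClosedTrail) : Prop :=
  ∀ v ∈ H.verts, ∃ k, v ∈ (T k).walk.anchors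

/-- An Euler tour: a closed trail traversing every edge (exactly once). -/
def IsEulerTour (H : EulerHypergraph V β) (T : H.ClosedTrail) : Prop :=
  ∀ e ∈ H.edges, e ∈ T.walk.edgeList

def HasEulerTour (H : EulerHypergraph V β) : Prop := ∃ T : H.ClosedTrail, H.IsEulerTour T

/-- A hypergraph is connected if every two vertices are joined by a walk. -/
def Connected (H : EulerHypergraph V β) : Prop :=
  ∀ u ∈ H.verts, ∀ v ∈ H.verts, Nonempty (H.Walk u v)

/-- `H \ F` : deletion of the edges in `F`. -/
def edel (H : EulerHypergraph V β) (F : Finset β) : EulerHypergraph V β where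
  verts := H.verts
  edges := H.edges \ F
  inc := H.inc
  inc_sub := fun e he => H.inc_sub e (Finset.mem_sdiff.mp he).1

/-- The subhypergraph induced by a vertex set `U`. -/
def induce (H : EulerHypergraph V β) (U : Finset V) : EulerHypergraph V β where
  verts := U
  edges := H.edges.filter (fun e => (H.inc e ∩ U).Nonempty)
  inc := fun e => H.inc e ∩ U
  inc_sub := fun _ _ => Finset.inter_subset_right

/-- The degree of a vertex: the number of edges incident with it. -/
def degree (H : EulerHypergraph V β) (v : V) : ℕ :=
  (H.edges.filter (fun e => v ∈ H.inc e)).card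

/-- `[S, V - S]_H` : the set of edges meeting both `S` and its complement. -/
def cutSet (H : EulerHypergraph V β) (S : Finset V) : Finset β :=
  H.edges.filter (fun e => (H.inc e ∩ S).Nonempty ∧ (H.inc e ∩ (H.verts \ S)).Nonempty)

/-- An edge cut: a set of edges of the form `[S, V - S]_H` for nonempty proper `S`. -/
def IsEdgeCut (H : EulerHypergraph V β) (F : Finset β) : Prop :=
  ∃ S : Finset V, S ⊆ H.verts ∧ S.Nonempty ∧ S ≠ H.verts ∧ F = H.cutSet S

/-- A minimal edge cut: an edge cut no proper subset of which is an edge cut. -/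
def IsMinimalEdgeCut (H : EulerHypergraph V β) (F : Finset β) : Prop :=
  H.IsEdgeCut F ∧ ∀ F' ⊂ F, ¬ H.IsEdgeCut F'

/-- `C` is the vertex set of a connected component of `H` : nonempty, connected as an
induced subhypergraph, and closed under the edges of `H`. -/
def IsComponent (H : EulerHypergraph V β) (C : Finset V) : Prop :=
  C.Nonempty ∧ C ⊆ H.verts ∧ (H.induce C).Connected ∧
    ∀ e ∈ H.edges, (H.inc e ∩ C).Nonempty → H.inc e ⊆ C

/-- `P` is a partition of `V(H)` into unions of the vertex sets of the connected
components of `H \ F`. -/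
def IsCompUnionPartition (H : EulerHypergraph V β) (F : Finset β) (P : I → Finset V) : Prop :=
  (∀ i, (P i).Nonempty) ∧ (∀ i, P i ⊆ H.verts) ∧ (∀ v ∈ H.verts, ∃! i, v ∈ P i) ∧
    ∀ e ∈ H.edges, e ∉ F → ∀ i, (H.inc e ∩ P i).Nonempty → H.inc e ⊆ P i

/-- `P` lists exactly the vertex sets of the connected components of `H \ F`. -/
def IsComponentPartition (H : EulerHypergraph V β) (F : Finset β) (P : I → Finset V) : Prop :=
  H.IsCompUnionPartition F P ∧ ∀ i, ((H.edel F).induce (P i)).Connected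

/-- The union `P i ∪ P j` associated with an unordered pair. -/
def pairFinset (P : I → Finset V) : Sym2 I → Finset V :=
  Sym2.lift ⟨fun i j => P i ∪ P j, fun _ _ => Finset.union_comm _ _⟩

/-- `α : F → I^[2]` is an edge cut assignment. -/
def IsECA (H : EulerHypergraph V β) (F : Finset β) (P : I → Finset V) (α : β → Sym2 I) : Prop :=
  ∀ f ∈ F, ∀ i j, α f = s(i, j) →
    (H.inc f ∩ P i).Nonempty ∧ (H.inc f ∩ P j).Nonempty ∧
      (i = j → 2 ≤ (H.inc f ∩ P i).card)

/-- The hypergraph `H^α` associated with an edge cut assignment `α`: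
each `f ∈ F` is replaced by `f^α = f ∩ (V_i ∪ V_j)` where `α f = ij`. -/
def assign (H : EulerHypergraph V β) (F : Finset β) (P : I → Finset V) (α : β → Sym2 I) :
    EulerHypergraph V β where
  verts := H.verts
  edges := H.edges
  inc := fun e => if e ∈ F then H.inc e ∩ pairFinset P (α e) else H.inc e
  inc_sub := by
    intro e he
    try dsimp only
    split
    · exact Finset.inter_subset_left.trans (H.inc_sub e he)
    · exact H.inc_sub e he

/-- The multigraph `G^α` associated with an edge cut assignment `α`, viewed as a
hypergraph on the vertex set `I` whose edges (indexed by `F`) are the pairs `α f`. -/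
def assignGraph [Fintype I] (F : Finset β) (α : β → Sym2 I) : EulerHypergraph I β where
  verts := Finset.univ
  edges := F
  inc := fun f => Sym2.lift ⟨fun i j => ({i, j} : Finset I), fun _ _ => Finset.pair_comm _ _⟩ (α f)
  inc_sub := fun _ _ => fun _ _ => Finset.mem_univ _

/-- The collapsed hypergraph `H ∘ S` with collapsed vertex `uc`. -/
def collapse (H : EulerHypergraph V β) (S : Finset V) (uc : V) : EulerHypergraph V β where
  verts := (H.verts \ S) ∪ {uc}
  edges := H.edges.filter (fun e => (H.inc e ∩ (H.verts \ S)).Nonempty)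
  inc := fun e => if (H.inc e ∩ S).Nonempty then (H.inc e \ S) ∪ {uc} else H.inc e
  inc_sub := by
    intro e he
    rw [Finset.mem_filter] at he
    try dsimp only
    split
    · intro x hx
      rcases Finset.mem_union.mp hx with h | h
      · exact Finset.mem_union_left _
          (Finset.mem_sdiff.mpr ⟨H.inc_sub e he.1 (Finset.mem_sdiff.mp h).1,
            (Finset.mem_sdiff.mp h).2⟩)
      · exact Finset.mem_union_right _ h
    · intro x hx
      rename_i h
      exact Finset.mem_union_left _ (Finset.mem_sdiff.mpr
        ⟨H.inc_sub e he.1 hx, fun hxS => h ⟨x, Finset.mem_inter.mpr ⟨hx, hxS⟩⟩⟩)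

/-- Lifting a walk along an inclusion of hypergraphs. -/
def Walk.lift {H1 H2 : EulerHypergraph V β} (hv : H1.verts ⊆ H2.verts) (he : H1.edges ⊆ H2.edges)
    (hi : ∀ e ∈ H1.edges, H1.inc e ⊆ H2.inc e) : ∀ {u v : V}, H1.Walk u v → H2.Walk u v
  | _, _, .nil x hx => .nil x (hv hx)
  | _, _, .cons u a w e hee hu hvv hne p =>
      .cons u a w e (he hee) (hi e hee hu) (hi e hee hvv) hne (Walk.lift hv he hi p)

theorem Walk.steps_lift {H1 H2 : EulerHypergraph V β} (hv : H1.verts ⊆ H2.verts)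
    (he : H1.edges ⊆ H2.edges) (hi : ∀ e ∈ H1.edges, H1.inc e ⊆ H2.inc e)
    {u v : V} (w : H1.Walk u v) : (w.lift hv he hi).steps = w.steps := by
  induction w with
  | nil => rfl
  | cons u a w e hee hu hvv hne p ih => simp [Walk.lift, Walk.steps, ih]

theorem Walk.edgeList_lift {H1 H2 : EulerHypergraph V β} (hv : H1.verts ⊆ H2.verts)
    (he : H1.edges ⊆ H2.edges) (hi : ∀ e ∈ H1.edges, H1.inc e ⊆ H2.inc e)
    {u v : V} (w : H1.Walk u v) : (w.lift hv he hi).edgeList = w.edgeList := by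
  simp [Walk.edgeList, Walk.steps_lift]

theorem Walk.anchors_lift {H1 H2 : EulerHypergraph V β} (hv : H1.verts ⊆ H2.verts)
    (he : H1.edges ⊆ H2.edges) (hi : ∀ e ∈ H1.edges, H1.inc e ⊆ H2.inc e)
    {u v : V} (w : H1.Walk u v) : (w.lift hv he hi).anchors = w.anchors := by
  simp [Walk.anchors, Walk.steps_lift]

/-- Lifting a closed trail along an inclusion of hypergraphs. -/
def ClosedTrail.lift {H1 H2 : EulerHypergraph V β} (hv : H1.verts ⊆ H2.verts)
    (he : H1.edges ⊆ H2.edges) (hi : ∀ e ∈ H1.edges, H1.inc e ⊆ H2.inc e)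
    (T : H1.ClosedTrail) : H2.ClosedTrail where
  base := T.base
  walk := T.walk.lift hv he hi
  two_le := by rw [Walk.edgeList_lift]; exact T.two_le
  nodup := by rw [Walk.edgeList_lift]; exact T.nodup

end EulerHypergraph
open EulerHypergraph in
/-- The hypergraph `H'` of Lemma 6.4: for each `f ∈ F`, adjoin a new vertex `u_f` and
replace `f` by `f' = (f - {u}) ∪ {u_f}` (indexed by `Sum.inl f`) and `e_f = {u_f, u}`
(indexed by `Sum.inr f`). -/
def EulerHypergraph.splitOff {V β : Type} [DecidableEq V] [DecidableEq β]
    (H : EulerHypergraph V β) (u : V) (hu : u ∈ H.verts) (F : Finset β) (uf : β → V) :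
    EulerHypergraph V (β ⊕ β) where
  verts := H.verts ∪ F.image uf
  edges := H.edges.image Sum.inl ∪ F.image Sum.inr
  inc := fun e => match e with
    | Sum.inl a => if a ∈ F then (H.inc a \ {u}) ∪ {uf a} else H.inc a
    | Sum.inr f => {uf f, u}
  inc_sub := by
    intro e he
    rcases Finset.mem_union.mp he with h | h
    · obtain ⟨a, ha, rfl⟩ := Finset.mem_image.mp h
      dsimp only
      split
      · rename_i haF
        intro x hx
        rcases Finset.mem_union.mp hx with hx | hx
        · exact Finset.mem_union_left _ (H.inc_sub a ha (Finset.mem_sdiff.mp hx).1)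
        · exact Finset.mem_union_right _
            (Finset.mem_image.mpr ⟨a, haF, (Finset.mem_singleton.mp hx).symm⟩)
      · exact fun x hx => Finset.mem_union_left _ (H.inc_sub a ha hx)
    · obtain ⟨g, hg, rfl⟩ := Finset.mem_image.mp h
      intro x hx
      dsimp only at hx
      rcases Finset.mem_insert.mp hx with rfl | hx
      · exact Finset.mem_union_right _ (Finset.mem_image.mpr ⟨g, hg, rfl⟩)
      · rw [Finset.mem_singleton.mp hx]
        exact Finset.mem_union_left _ hu



namespace EulerAux
open EulerHypergraph

variable {V β : Type} [DecidableEq V] [DecidableEq β]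

/-- Validity of a single step in `H`. -/
def Ok (H : EulerHypergraph V β) (s : V × β × V) : Prop :=
  s.2.1 ∈ H.edges ∧ s.1 ∈ H.inc s.2.1 ∧ s.2.2 ∈ H.inc s.2.1 ∧ s.1 ≠ s.2.2

/-- Linkedness of consecutive steps. -/
def Lnk {V β : Type} : (V × β × V) → (V × β × V) → Prop := fun s t => s.2.2 = t.1

lemma steps_eq_nil {H : EulerHypergraph V β} {a b : V} (w : H.Walk a b) (h : w.steps = []) :
    a = b := by
  cases w with
  | nil => rfl
  | cons u v w e he hu hv hne p => simp [Walk.steps] at h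

lemma steps_ok {H : EulerHypergraph V β} {a b : V} (w : H.Walk a b) :
    ∀ s ∈ w.steps, Ok H s := by
  induction w with
  | nil => simp [Walk.steps]
  | cons u v w e he hu hv hne p ih =>
    intro s hs
    rcases List.mem_cons.mp hs with rfl | hs
    · exact ⟨he, hu, hv, hne⟩
    · exact ih s hs

lemma steps_head {H : EulerHypergraph V β} {a b : V} (w : H.Walk a b) :
    ∀ s ∈ w.steps.head?, s.1 = a := by
  cases w with
  | nil => simp [Walk.steps]
  | cons u v w e he hu hv hne p => simp [Walk.steps]

lemma steps_getLast {H : EulerHypergraph V β} {a b : V} (w : H.Walk a b) :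
    ∀ s ∈ w.steps.getLast?, s.2.2 = b := by
  induction w with
  | nil => simp [Walk.steps]
  | cons u v w e he hu hv hne p ih =>
    intro s hs
    rw [Walk.steps] at hs
    rcases hp : p.steps with _ | ⟨t, rest⟩
    · rw [hp] at hs
      simp at hs
      rw [← hs]
      exact steps_eq_nil p hp
    · rw [hp] at hs
      rw [List.getLast?_cons_cons] at hs
      exact ih s (hp ▸ hs)

lemma steps_chain' {H : EulerHypergraph V β} {a b : V} (w : H.Walk a b) :
    List.IsChain Lnk w.steps := by
  induction w with
  | nil => simp [Walk.steps]
  | cons u v w e he hu hv hne p ih =>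
    rw [Walk.steps]
    rw [List.isChain_cons]
    exact ⟨fun t ht => (steps_head p t ht).symm, ih⟩

lemma fst_mem_anchors {H : EulerHypergraph V β} {a b : V} (w : H.Walk a b) :
    ∀ s ∈ w.steps, s.1 ∈ w.anchors := by
  induction w with
  | nil => simp [Walk.steps]
  | cons u v w e he hu hv hne p ih =>
    intro s hs
    rw [Walk.steps] at hs
    rcases List.mem_cons.mp hs with rfl | hs
    · simp [Walk.anchors]
    · have := ih s hs
      rw [Walk.anchors] at this
      rcases List.mem_cons.mp this with h | h
      · rw [Walk.anchors, Walk.steps]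
        exact List.mem_cons_of_mem _ (by simp; exact Or.inl h)
      · rw [Walk.anchors, Walk.steps]
        refine List.mem_cons_of_mem _ ?_
        simp at h ⊢
        obtain ⟨x, hx, hxx⟩ := h
        exact Or.inr ⟨x, hx, hxx⟩

lemma snd_mem_anchors {H : EulerHypergraph V β} {a b : V} (w : H.Walk a b) :
    ∀ s ∈ w.steps, s.2.2 ∈ w.anchors := by
  intro s hs
  rw [Walk.anchors]
  exact List.mem_cons_of_mem _ (List.mem_map.mpr ⟨s, hs, rfl⟩)

lemma anchors_subset_verts {H : EulerHypergraph V β} {a b : V} (w : H.Walk a b)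
    (hne : w.steps ≠ []) : ∀ v ∈ w.anchors, v ∈ H.verts := by
  intro v hv
  rw [Walk.anchors] at hv
  rcases List.mem_cons.mp hv with rfl | hv
  · rcases h : w.steps with _ | ⟨s, rest⟩
    · exact absurd h hne
    · have h1 := steps_head w s (by rw [h]; rfl)
      have h2 := steps_ok w s (by rw [h]; exact List.mem_cons_self)
      rw [← h1]
      exact H.inc_sub _ h2.1 h2.2.1
  · obtain ⟨s, hs, rfl⟩ := List.mem_map.mp hv
    have h := steps_ok w s hs
    exact H.inc_sub _ h.1 h.2.2.1


/-- Change the starting point of a walk along an equality. -/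
def wcopy {H : EulerHypergraph V β} {x b : V} (w : H.Walk x b) {a : V} (h : x = a) :
    H.Walk a b := h ▸ w

lemma steps_wcopy {H : EulerHypergraph V β} {x b : V} (w : H.Walk x b) {a : V} (h : x = a) :
    (wcopy w h).steps = w.steps := by subst h; rfl

/-- Build a walk from a list of steps. -/
def ofSteps (H : EulerHypergraph V β) (b : V) (hb : b ∈ H.verts) :
    ∀ (L : List (V × β × V)) (a : V), (∀ s ∈ L, Ok H s) → List.IsChain Lnk L →
      (∀ s ∈ L.head?, s.1 = a) → (L = [] → a = b) → (∀ s ∈ L.getLast?, s.2.2 = b) →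
      H.Walk a b
  | [], _, _, _, _, hnil, _ => wcopy (Walk.nil b hb) (hnil rfl).symm
  | (a', e, c) :: L, a, hok, hch, hhead, _, hlast =>
      wcopy (Walk.cons a' c b e (hok _ (List.mem_cons_self)).1
        (hok _ (List.mem_cons_self)).2.1 (hok _ (List.mem_cons_self)).2.2.1
        (hok _ (List.mem_cons_self)).2.2.2
        (ofSteps H b hb L c (fun s hs => hok s (List.mem_cons_of_mem _ hs))
          (List.isChain_cons.mp hch).2
          (fun s hs => ((List.isChain_cons.mp hch).1 s hs).symm)
          (fun hL => by subst hL; exact hlast (a', e, c) rfl)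
          (fun s hs => hlast s (by
            rcases L with _ | ⟨t, L'⟩
            · exact absurd hs (by simp)
            · rwa [List.getLast?_cons_cons]))))
        (hhead (a', e, c) rfl)

lemma steps_ofSteps (H : EulerHypergraph V β) (b : V) (hb : b ∈ H.verts) :
    ∀ (L : List (V × β × V)) (a : V) (hok : ∀ s ∈ L, Ok H s) (hch : List.IsChain Lnk L)
      (hhead : ∀ s ∈ L.head?, s.1 = a) (hnil : L = [] → a = b)
      (hlast : ∀ s ∈ L.getLast?, s.2.2 = b),
      (ofSteps H b hb L a hok hch hhead hnil hlast).steps = L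
  | [], a, hok, hch, hhead, hnil, hlast => by
      rw [ofSteps, steps_wcopy]; rfl
  | (a', e, c) :: L, a, hok, hch, hhead, hnil, hlast => by
      rw [ofSteps, steps_wcopy, Walk.steps, steps_ofSteps]

/-- Build a closed trail from a list of steps. -/
def mkTrail (H : EulerHypergraph V β) (a : V) (ha : a ∈ H.verts) (L : List (V × β × V))
    (hok : ∀ s ∈ L, Ok H s) (hch : List.IsChain Lnk L)
    (hhead : ∀ s ∈ L.head?, s.1 = a) (hlast : ∀ s ∈ L.getLast?, s.2.2 = a)
    (hlen : 2 ≤ L.length) (hnd : (L.map (fun s => s.2.1)).Nodup) : H.ClosedTrail where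
  base := a
  walk := ofSteps H a ha L a hok hch hhead (fun _ => rfl) hlast
  two_le := by
    rw [Walk.edgeList, steps_ofSteps, List.length_map]; exact hlen
  nodup := by
    rw [Walk.edgeList, steps_ofSteps]; exact hnd

lemma mkTrail_steps (H : EulerHypergraph V β) (a : V) (ha : a ∈ H.verts) (L : List (V × β × V))
    (hok : ∀ s ∈ L, Ok H s) (hch : List.IsChain Lnk L)
    (hhead : ∀ s ∈ L.head?, s.1 = a) (hlast : ∀ s ∈ L.getLast?, s.2.2 = a)
    (hlen : 2 ≤ L.length) (hnd : (L.map (fun s => s.2.1)).Nodup) :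
    (mkTrail H a ha L hok hch hhead hlast hlen hnd).walk.steps = L :=
  steps_ofSteps H a ha L a hok hch hhead _ hlast


section Split

variable (H : EulerHypergraph V β) (u : V) (hu : u ∈ H.verts) (F : Finset β)
  (hF : F ⊆ H.edges) (hincident : ∀ f ∈ F, u ∈ H.inc f)
  (uf : β → V) (huf_inj : Set.InjOn uf ↑F) (huf_new : ∀ f ∈ F, uf f ∉ H.verts)

local notation "H'" => EulerHypergraph.splitOff H u hu F uf

lemma mem_edges_inl (e : β) : Sum.inl e ∈ (H').edges ↔ e ∈ H.edges := by
  simp [EulerHypergraph.splitOff]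

lemma mem_edges_inr (f : β) : Sum.inr f ∈ (H').edges ↔ f ∈ F := by
  simp [EulerHypergraph.splitOff]

lemma inc_inl_mem (e : β) (he : e ∈ F) (x : V) :
    x ∈ (H').inc (Sum.inl e) ↔ (x ∈ H.inc e ∧ x ≠ u) ∨ x = uf e := by
  show x ∈ (if e ∈ F then (H.inc e \ {u}) ∪ {uf e} else H.inc e) ↔ _
  rw [if_pos he]
  simp [Finset.mem_sdiff, or_comm]

lemma inc_inl_not_mem (e : β) (he : e ∉ F) :
    (H').inc (Sum.inl e) = H.inc e := by
  show (if e ∈ F then (H.inc e \ {u}) ∪ {uf e} else H.inc e) = _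
  rw [if_neg he]

lemma inc_inr (f : β) : (H').inc (Sum.inr f) = {uf f, u} := rfl

include hF huf_inj huf_new in
lemma classify_new (f : β) (hf : f ∈ F) (e : β ⊕ β) (he : e ∈ (H').edges)
    (hmem : uf f ∈ (H').inc e) : e = Sum.inl f ∨ e = Sum.inr f := by
  match e with
  | Sum.inl a =>
    rw [mem_edges_inl] at he
    by_cases haF : a ∈ F
    · rw [inc_inl_mem H u hu F uf a haF] at hmem
      rcases hmem with ⟨h1, _⟩ | h1
      · exact absurd (H.inc_sub a he h1) (huf_new f hf)
      · exact Or.inl (by rw [huf_inj hf haF h1])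
    · rw [inc_inl_not_mem H u hu F uf a haF] at hmem
      exact absurd (H.inc_sub a he hmem) (huf_new f hf)
  | Sum.inr a =>
    rw [mem_edges_inr] at he
    rw [inc_inr] at hmem
    rcases Finset.mem_insert.mp hmem with h1 | h1
    · exact Or.inr (by rw [huf_inj hf he h1])
    · exact absurd (Finset.mem_singleton.mp h1 ▸ hu) (huf_new f hf)


end Split

/-- Expansion of a list of steps of `H` into steps of `H'`. -/
def expandSteps (u : V) (F : Finset β) (uf : β → V) :
    List (V × β × V) → List (V × (β ⊕ β) × V)
  | [] => []
  | (a, e, b) :: L =>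
    if e ∈ F then
      if a = u then
        (u, Sum.inr e, uf e) :: (uf e, Sum.inl e, b) :: expandSteps u F uf L
      else (a, Sum.inl e, uf e) :: (uf e, Sum.inr e, u) :: expandSteps u F uf L
    else (a, Sum.inl e, b) :: expandSteps u F uf L

section Expand

variable (H : EulerHypergraph V β) (u : V) (hu : u ∈ H.verts) (F : Finset β)
  (hF : F ⊆ H.edges) (hincident : ∀ f ∈ F, u ∈ H.inc f)
  (uf : β → V) (huf_inj : Set.InjOn uf ↑F) (huf_new : ∀ f ∈ F, uf f ∉ H.verts)

local notation "H'" => EulerHypergraph.splitOff H u hu F uf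
local notation "exp" => expandSteps u F uf

lemma expand_nil_iff (L : List (V × β × V)) : exp L = [] ↔ L = [] := by
  constructor
  · intro h
    rcases L with _ | ⟨⟨a, e, b⟩, L⟩
    · rfl
    · rw [expandSteps] at h
      by_cases he : e ∈ F
      · by_cases ha : a = u <;> simp [he, ha] at h
      · simp [he] at h
  · rintro rfl; rfl

lemma expand_length (L : List (V × β × V)) : L.length ≤ (exp L).length := by
  induction L with
  | nil => simp [expandSteps]
  | cons s L ih =>
    obtain ⟨a, e, b⟩ := s
    rw [expandSteps]
    by_cases he : e ∈ F
    · by_cases ha : a = u <;> simp [he, ha] <;> omega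
    · simp [he]; omega

lemma expand_head (L : List (V × β × V)) :
    ∀ s ∈ (exp L).head?, ∃ t ∈ L.head?, s.1 = t.1 := by
  rcases L with _ | ⟨⟨a, e, b⟩, L⟩
  · simp [expandSteps]
  · rw [expandSteps]
    by_cases he : e ∈ F
    · by_cases ha : a = u <;> simp [he, ha]
    · simp [he]

include hincident huf_new in
lemma expand_ok (L : List (V × β × V)) (hok : ∀ s ∈ L, Ok H s) :
    ∀ s ∈ exp L, Ok (H') s := by
  induction L with
  | nil => simp [expandSteps]
  | cons t L ih =>
    obtain ⟨a, e, b⟩ := t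
    have hok0 := hok (a, e, b) (List.mem_cons_self)
    obtain ⟨he0, ha0, hb0, hne0⟩ := hok0
    have ihL := ih (fun s hs => hok s (List.mem_cons_of_mem _ hs))
    intro s hs
    rw [expandSteps] at hs
    by_cases he : e ∈ F
    · have hinl : Sum.inl e ∈ (H').edges := (mem_edges_inl H u hu F uf e).mpr he0
      have hinr : Sum.inr e ∈ (H').edges := (mem_edges_inr H u hu F uf e).mpr he
      have hufe : uf e ∈ (H').inc (Sum.inl e) :=
        (inc_inl_mem H u hu F uf e he (uf e)).mpr (Or.inr rfl)
      have hufr : uf e ∈ (H').inc (Sum.inr e) := by rw [inc_inr]; simp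
      have hur : u ∈ (H').inc (Sum.inr e) := by rw [inc_inr]; simp
      by_cases ha : a = u
      · rw [if_pos he, if_pos ha] at hs
        rcases List.mem_cons.mp hs with rfl | hs
        · exact ⟨hinr, hur, hufr, fun h => huf_new e he ((show u = uf e from h) ▸ hu)⟩
        rcases List.mem_cons.mp hs with rfl | hs
        · refine ⟨hinl, hufe, ?_, ?_⟩
          · exact (inc_inl_mem H u hu F uf e he b).mpr (Or.inl ⟨hb0, fun h => hne0 (ha.trans h.symm)⟩)
          · intro h
            exact huf_new e he (by
              rw [show uf e = b from h]; exact H.inc_sub e he0 hb0)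
        · exact ihL s hs
      · rw [if_pos he, if_neg ha] at hs
        rcases List.mem_cons.mp hs with rfl | hs
        · refine ⟨hinl, (inc_inl_mem H u hu F uf e he a).mpr (Or.inl ⟨ha0, ha⟩), hufe, ?_⟩
          intro h
          exact huf_new e he (by
            rw [← show a = uf e from h]; exact H.inc_sub e he0 ha0)
        rcases List.mem_cons.mp hs with rfl | hs
        · exact ⟨hinr, hufr, hur, fun h => huf_new e he (by
            rw [show uf e = u from h]; exact hu)⟩
        · exact ihL s hs
    · rw [if_neg he] at hs
      rcases List.mem_cons.mp hs with rfl | hs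
      · refine ⟨(mem_edges_inl H u hu F uf e).mpr he0, ?_, ?_, hne0⟩ <;>
          rw [inc_inl_not_mem H u hu F uf e he]
        · exact ha0
        · exact hb0
      · exact ihL s hs

lemma expand_chain (L : List (V × β × V)) (hch : List.IsChain Lnk L)
    (htouch : ∀ s ∈ L, s.2.1 ∈ F → s.1 = u ∨ s.2.2 = u) :
    List.IsChain Lnk (exp L) := by
  induction L with
  | nil => simp [expandSteps]
  | cons t L ih =>
    obtain ⟨a, e, b⟩ := t
    have hch' := (List.isChain_cons.mp hch).2
    have hlink := (List.isChain_cons.mp hch).1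
    have ihL := ih hch' (fun s hs hf => htouch s (List.mem_cons_of_mem _ hs) hf)
    have hheadlink : ∀ (c : V) (x : β ⊕ β), ∀ s ∈ (exp L).head?, Lnk (c, x, b) s := by
      intro c x s hs
      obtain ⟨t, ht, hst⟩ := expand_head u F uf L s hs
      have := hlink t ht
      show b = s.1
      rw [hst]; exact this
    rw [expandSteps]
    by_cases he : e ∈ F
    · by_cases ha : a = u
      · rw [if_pos he, if_pos ha]
        refine List.isChain_cons.mpr ⟨fun s hs => by simp at hs; rw [← hs]; rfl, ?_⟩
        refine List.isChain_cons.mpr ⟨?_, ihL⟩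
        intro s hs
        exact hheadlink (uf e) (Sum.inl e) s hs
      · rw [if_pos he, if_neg ha]
        have hb : b = u := by
          rcases htouch (a, e, b) (List.mem_cons_self) he with h | h
          · exact absurd h ha
          · exact h
        refine List.isChain_cons.mpr ⟨fun s hs => by simp at hs; rw [← hs]; rfl, ?_⟩
        refine List.isChain_cons.mpr ⟨?_, ihL⟩
        intro s hs
        obtain ⟨t, ht, hst⟩ := expand_head u F uf L s hs
        have := hlink t ht
        show u = s.1
        rw [hst, ← this, hb]
    · rw [if_neg he]
      refine List.isChain_cons.mpr ⟨?_, ihL⟩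
      intro s hs
      exact hheadlink a (Sum.inl e) s hs

lemma expand_last (L : List (V × β × V))
    (htouch : ∀ s ∈ L, s.2.1 ∈ F → s.1 = u ∨ s.2.2 = u) :
    ∀ s ∈ (exp L).getLast?, ∃ t ∈ L.getLast?, s.2.2 = t.2.2 := by
  induction L with
  | nil => simp [expandSteps]
  | cons t L ih =>
    obtain ⟨a, e, b⟩ := t
    have ihL := ih (fun s hs hf => htouch s (List.mem_cons_of_mem _ hs) hf)
    intro s hs
    rcases hL : L with _ | ⟨t', L'⟩
    · subst hL
      rw [expandSteps] at hs
      by_cases he : e ∈ F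
      · by_cases ha : a = u
        · rw [if_pos he, if_pos ha] at hs
          simp [expandSteps] at hs
          exact ⟨(a, e, b), by simp, by rw [← hs]⟩
        · rw [if_pos he, if_neg ha] at hs
          simp [expandSteps] at hs
          have hb : b = u := by
            rcases htouch (a, e, b) (List.mem_cons_self) he with h | h
            · exact absurd h ha
            · exact h
          exact ⟨(a, e, b), by simp, by rw [← hs, hb]⟩
      · rw [if_neg he] at hs
        simp [expandSteps] at hs
        exact ⟨(a, e, b), by simp, by rw [← hs]⟩
    · subst hL
      have hne : exp (t' :: L') ≠ [] := by
        rw [Ne, expand_nil_iff]; simp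
      have hs' : s ∈ (exp (t' :: L')).getLast? := by
        rw [expandSteps] at hs
        by_cases he : e ∈ F
        · by_cases ha : a = u
          · rw [if_pos he, if_pos ha] at hs
            rcases hE : exp (t' :: L') with _ | ⟨x, X⟩
            · exact absurd hE hne
            · rw [hE, List.getLast?_cons_cons, List.getLast?_cons_cons] at hs
              exact hs
          · rw [if_pos he, if_neg ha] at hs
            rcases hE : exp (t' :: L') with _ | ⟨x, X⟩
            · exact absurd hE hne
            · rw [hE, List.getLast?_cons_cons, List.getLast?_cons_cons] at hs
              exact hs
        · rw [if_neg he] at hs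
          rcases hE : exp (t' :: L') with _ | ⟨x, X⟩
          · exact absurd hE hne
          · rw [hE, List.getLast?_cons_cons] at hs
            exact hs
      obtain ⟨t0, ht0, hst0⟩ := ihL s hs'
      exact ⟨t0, by rw [List.getLast?_cons_cons]; exact ht0, hst0⟩

lemma expand_edges_inl (L : List (V × β × V)) (e : β) :
    Sum.inl e ∈ (exp L).map (fun s => s.2.1) ↔ e ∈ L.map (fun s => s.2.1) := by
  induction L with
  | nil => simp [expandSteps]
  | cons t L ih =>
    obtain ⟨a, e', b⟩ := t
    rw [expandSteps]
    by_cases he : e' ∈ F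
    · by_cases ha : a = u <;> simp [he, ha, ih]
    · simp [he, ih]

lemma expand_edges_inr (L : List (V × β × V)) (e : β) :
    Sum.inr e ∈ (exp L).map (fun s => s.2.1) ↔ e ∈ L.map (fun s => s.2.1) ∧ e ∈ F := by
  induction L with
  | nil => simp [expandSteps]
  | cons t L ih =>
    obtain ⟨a, e', b⟩ := t
    rw [expandSteps]
    by_cases he : e' ∈ F
    · by_cases ha : a = u <;> simp [he, ha, ih] <;> aesop
    · simp [he, ih]
      aesop

lemma expand_nodup (L : List (V × β × V)) (hnd : (L.map (fun s => s.2.1)).Nodup) :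
    ((exp L).map (fun s => s.2.1)).Nodup := by
  induction L with
  | nil => simp [expandSteps]
  | cons t L ih =>
    obtain ⟨a, e, b⟩ := t
    simp only [List.map_cons, List.nodup_cons] at hnd
    have ihL := ih hnd.2
    have hnl : Sum.inl e ∉ (exp L).map (fun s => s.2.1) := by
      rw [expand_edges_inl]; exact hnd.1
    have hnr : Sum.inr e ∉ (exp L).map (fun s => s.2.1) := by
      rw [expand_edges_inr]; exact fun h => hnd.1 h.1
    rw [expandSteps]
    by_cases he : e ∈ F
    · by_cases ha : a = u <;> simp [he, ha, ihL, hnl, hnr]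
    · simp [he, ihL, hnl]

lemma expand_snd (L : List (V × β × V))
    (htouch : ∀ s ∈ L, s.2.1 ∈ F → s.1 = u ∨ s.2.2 = u) :
    ∀ s ∈ exp L, s.2.2 ∈ L.map (fun t => t.2.2) ∨
      ∃ f ∈ F, f ∈ L.map (fun t => t.2.1) ∧ s.2.2 = uf f := by
  induction L with
  | nil => simp [expandSteps]
  | cons t L ih =>
    obtain ⟨a, e, b⟩ := t
    have ihL := ih (fun s hs hf => htouch s (List.mem_cons_of_mem _ hs) hf)
    intro s hs
    have hres : s.2.2 ∈ L.map (fun t => t.2.2) ∨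
        (∃ f ∈ F, f ∈ L.map (fun t => t.2.1) ∧ s.2.2 = uf f) →
        s.2.2 ∈ ((a, e, b) :: L).map (fun t => t.2.2) ∨
        ∃ f ∈ F, f ∈ ((a, e, b) :: L).map (fun t => t.2.1) ∧ s.2.2 = uf f := by
      intro h
      rcases h with h | ⟨f, hf1, hf2, hf3⟩
      · exact Or.inl (by simp [h])
      · exact Or.inr ⟨f, hf1, by simp [hf2], hf3⟩
    rw [expandSteps] at hs
    by_cases he : e ∈ F
    · by_cases ha : a = u
      · rw [if_pos he, if_pos ha] at hs
        rcases List.mem_cons.mp hs with rfl | hs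
        · exact Or.inr ⟨e, he, by simp, rfl⟩
        rcases List.mem_cons.mp hs with rfl | hs
        · exact Or.inl (by simp)
        · exact hres (ihL s hs)
      · rw [if_pos he, if_neg ha] at hs
        have hb : b = u := by
          rcases htouch (a, e, b) (List.mem_cons_self) he with h | h
          · exact absurd h ha
          · exact h
        rcases List.mem_cons.mp hs with rfl | hs
        · exact Or.inr ⟨e, he, by simp, rfl⟩
        rcases List.mem_cons.mp hs with rfl | hs
        · exact Or.inl (by simp [hb])
        · exact hres (ihL s hs)
    · rw [if_neg he] at hs
      rcases List.mem_cons.mp hs with rfl | hs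
      · exact Or.inl (by simp)
      · exact hres (ihL s hs)


end Expand

lemma trail_steps_ne_nil {H : EulerHypergraph V β} (T : H.ClosedTrail) :
    T.walk.steps ≠ [] := by
  intro h
  have := T.two_le
  rw [Walk.edgeList, h] at this
  simp at this

lemma trail_base_mem {H : EulerHypergraph V β} (T : H.ClosedTrail) : T.base ∈ H.verts := by
  rcases h : T.walk.steps with _ | ⟨s, rest⟩
  · exact absurd h (trail_steps_ne_nil T)
  · have h1 := steps_head T.walk s (by rw [h]; rfl)
    have h2 := steps_ok T.walk s (by rw [h]; exact List.mem_cons_self)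
    rw [← h1]
    exact H.inc_sub _ h2.1 h2.2.1

section Forward

variable (H : EulerHypergraph V β) (u : V) (hu : u ∈ H.verts) (F : Finset β)
  (hF : F ⊆ H.edges) (hincident : ∀ f ∈ F, u ∈ H.inc f)
  (uf : β → V) (huf_inj : Set.InjOn uf ↑F) (huf_new : ∀ f ∈ F, uf f ∉ H.verts)

local notation "H'" => EulerHypergraph.splitOff H u hu F uf
local notation "exp" => expandSteps u F uf

include hF hincident huf_inj huf_new in
lemma forward {κ : Type} (T : κ → H.ClosedTrail) (hfam : H.IsEulerFamily T)
    (htrav : ∀ f ∈ F, ∃ k, (T k).traverses u f) :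
    ∃ T' : κ → (H').ClosedTrail, (H').IsEulerFamily T' ∧
      ∀ k, (T' k).walk.steps = exp ((T k).walk.steps) := by
  obtain ⟨hdisj, hanch, hcov⟩ := hfam
  have htouch : ∀ k, ∀ s ∈ (T k).walk.steps, s.2.1 ∈ F → s.1 = u ∨ s.2.2 = u := by
    intro k s hs hf
    obtain ⟨k0, s0, hs0, hs0e, hs0u⟩ := htrav s.2.1 hf
    have hmem : s.2.1 ∈ (T k).walk.edgeList := List.mem_map.mpr ⟨s, hs, rfl⟩
    have hmem0 : s.2.1 ∈ (T k0).walk.edgeList := List.mem_map.mpr ⟨s0, hs0, hs0e⟩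
    have hkk : k = k0 := by
      by_contra hne
      exact hdisj k k0 hne s.2.1 hmem hmem0
    subst hkk
    have hnd : ((T k).walk.steps.map (fun s => s.2.1)).Nodup := (T k).nodup
    have : s = s0 := List.inj_on_of_nodup_map hnd hs hs0 hs0e.symm
    rw [this]
    exact hs0u
  have hbase : ∀ k, (T k).base ∈ (H').verts := fun k =>
    Finset.mem_union_left _ (trail_base_mem (T k))
  have hsteps_ne : ∀ k, (T k).walk.steps ≠ [] := fun k => trail_steps_ne_nil (T k)
  have hOK : ∀ k, ∀ s ∈ exp ((T k).walk.steps), Ok (H') s := fun k =>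
    expand_ok H u hu F hincident uf huf_new _ (steps_ok _)
  have hCH : ∀ k, List.IsChain Lnk (exp ((T k).walk.steps)) := fun k =>
    expand_chain u F uf _ (steps_chain' _) (htouch k)
  have hHD : ∀ k, ∀ s ∈ (exp ((T k).walk.steps)).head?, s.1 = (T k).base := by
    intro k s hs
    obtain ⟨t, ht, hst⟩ := expand_head u F uf _ s hs
    rw [hst]; exact steps_head _ t ht
  have hLS : ∀ k, ∀ s ∈ (exp ((T k).walk.steps)).getLast?, s.2.2 = (T k).base := by
    intro k s hs
    obtain ⟨t, ht, hst⟩ := expand_last u F uf _ (htouch k) s hs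
    rw [hst]; exact steps_getLast _ t ht
  have hLEN : ∀ k, 2 ≤ (exp ((T k).walk.steps)).length := fun k =>
    le_trans (by simpa [Walk.edgeList] using (T k).two_le) (expand_length u F uf _)
  have hND : ∀ k, ((exp ((T k).walk.steps)).map (fun s => s.2.1)).Nodup := fun k =>
    expand_nodup u F uf _ (by simpa [Walk.edgeList] using (T k).nodup)
  refine ⟨fun k => mkTrail (H') (T k).base (hbase k) (exp ((T k).walk.steps))
    (hOK k) (hCH k) (hHD k) (hLS k) (hLEN k) (hND k),
    ⟨?_, ?_, ?_⟩, fun k => mkTrail_steps _ _ _ _ _ _ _ _ _ _⟩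
  · -- edge disjoint
    intro k l hkl x hx hx'
    simp only [Walk.edgeList, mkTrail_steps] at hx hx'
    match x with
    | Sum.inl e =>
      rw [expand_edges_inl] at hx hx'
      exact hdisj k l hkl e (List.mem_map.mpr (by
        obtain ⟨t, ht, hte⟩ := List.mem_map.mp hx; exact ⟨t, ht, hte⟩))
        (List.mem_map.mpr (by
        obtain ⟨t, ht, hte⟩ := List.mem_map.mp hx'; exact ⟨t, ht, hte⟩))
    | Sum.inr e =>
      rw [expand_edges_inr] at hx hx'
      exact hdisj k l hkl e (List.mem_map.mpr (by
        obtain ⟨t, ht, hte⟩ := List.mem_map.mp hx.1; exact ⟨t, ht, hte⟩))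
        (List.mem_map.mpr (by
        obtain ⟨t, ht, hte⟩ := List.mem_map.mp hx'.1; exact ⟨t, ht, hte⟩))
  · -- anchor disjoint
    intro k l hkl v hv hv'
    simp only [Walk.anchors, mkTrail_steps] at hv hv'
    have hchar : ∀ m, v ∈ (T m).base :: (exp ((T m).walk.steps)).map (fun s => s.2.2) →
        v ∈ (T m).walk.anchors ∨ ∃ f ∈ F, f ∈ (T m).walk.edgeList ∧ v = uf f := by
      intro m hm
      rcases List.mem_cons.mp hm with rfl | hm
      · exact Or.inl (by rw [Walk.anchors]; exact List.mem_cons_self)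
      · obtain ⟨s, hsm, rfl⟩ := List.mem_map.mp hm
        rcases expand_snd u F uf _ (htouch m) s hsm with h | ⟨f, hf1, hf2, hf3⟩
        · exact Or.inl (by
            rw [Walk.anchors]
            exact List.mem_cons_of_mem _ h)
        · exact Or.inr ⟨f, hf1, hf2, hf3⟩
    rcases hchar k hv with h1 | ⟨f, hf1, hf2, hf3⟩
    · rcases hchar l hv' with h2 | ⟨g, hg1, hg2, hg3⟩
      · exact hanch k l hkl v h1 h2
      · exact huf_new g hg1 (hg3 ▸ anchors_subset_verts _ (hsteps_ne k) v h1)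
    · rcases hchar l hv' with h2 | ⟨g, hg1, hg2, hg3⟩
      · exact huf_new f hf1 (hf3 ▸ anchors_subset_verts _ (hsteps_ne l) v h2)
      · have : f = g := huf_inj hf1 hg1 (by rw [← hf3, ← hg3])
        subst this
        exact hdisj k l hkl f hf2 hg2
  · -- coverage
    intro e' he'
    rcases Finset.mem_union.mp he' with h | h
    · obtain ⟨e, he, rfl⟩ := Finset.mem_image.mp h
      obtain ⟨k, hk⟩ := hcov e he
      refine ⟨k, ?_⟩
      simp only [Walk.edgeList, mkTrail_steps]
      rw [expand_edges_inl]
      exact hk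
    · obtain ⟨f, hf, rfl⟩ := Finset.mem_image.mp h
      obtain ⟨k, hk⟩ := hcov f (hF hf)
      refine ⟨k, ?_⟩
      simp only [Walk.edgeList, mkTrail_steps]
      rw [expand_edges_inr]
      exact ⟨hk, hf⟩

end Forward

/-- Contraction of a list of steps of `H'` into steps of `H`. -/
def contractSteps (F : Finset β) : List (V × (β ⊕ β) × V) → List (V × β × V)
  | [] => []
  | [(a, Sum.inl e, b)] => [(a, e, b)]
  | [(_, Sum.inr _, _)] => []
  | (a, Sum.inl e, b) :: t :: rest' =>
      if e ∈ F then (a, e, t.2.2) :: contractSteps F rest'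
      else (a, e, b) :: contractSteps F (t :: rest')
  | (a, Sum.inr f, _) :: t :: rest' => (a, f, t.2.2) :: contractSteps F rest'

section Contract

variable (H : EulerHypergraph V β) (u : V) (hu : u ∈ H.verts) (F : Finset β)
  (hF : F ⊆ H.edges) (hincident : ∀ f ∈ F, u ∈ H.inc f)
  (uf : β → V) (huf_inj : Set.InjOn uf ↑F) (huf_new : ∀ f ∈ F, uf f ∉ H.verts)

local notation "H'" => EulerHypergraph.splitOff H u hu F uf
local notation "con" => contractSteps F

include hF huf_inj huf_new in
lemma step_at_new (f : β) (hf : f ∈ F) (t : V × (β ⊕ β) × V) (ht : Ok (H') t)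
    (h1 : t.1 = uf f) :
    (t.2.1 = Sum.inl f ∧ t.2.2 ∈ H.inc f ∧ t.2.2 ≠ u ∧ t.2.2 ∈ H.verts) ∨
    (t.2.1 = Sum.inr f ∧ t.2.2 = u) := by
  obtain ⟨hte, ht1, ht2, htne⟩ := ht
  rw [h1] at ht1
  rcases classify_new H u hu F hF uf huf_inj huf_new f hf t.2.1 hte ht1 with h | h
  · left
    refine ⟨h, ?_⟩
    rw [h] at ht2
    rw [inc_inl_mem H u hu F uf f hf] at ht2
    rcases ht2 with ⟨h2, h3⟩ | h2
    · exact ⟨h2, h3, H.inc_sub f (hF hf) h2⟩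
    · exact absurd (h1.trans h2.symm) htne
  · right
    refine ⟨h, ?_⟩
    rw [h, inc_inr] at ht2
    rcases Finset.mem_insert.mp ht2 with h2 | h2
    · exact absurd (h1.trans h2.symm) htne
    · exact Finset.mem_singleton.mp h2

include hF hincident huf_inj huf_new in
lemma contract_spec : ∀ (n : ℕ) (L : List (V × (β ⊕ β) × V)), L.length ≤ n →
    ∀ (a b : V), a ∈ H.verts → b ∈ H.verts →
    (∀ s ∈ L, Ok (H') s) → List.IsChain Lnk L →
    ((L.map (fun s => s.2.1)).Nodup) →
    (∀ s ∈ L, ∀ f, s.2.1 = Sum.inl f → f ∈ F → s.1 = uf f ∨ s.2.2 = uf f) →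
    (∀ s ∈ L.head?, s.1 = a) → (∀ s ∈ L.getLast?, s.2.2 = b) →
    (∀ s ∈ con L, Ok H s) ∧ List.IsChain Lnk (con L) ∧
    (∀ s ∈ (con L).head?, s.1 = a) ∧ (∀ s ∈ (con L).getLast?, s.2.2 = b) ∧
    (con L = [] → L = []) ∧
    ((con L).map (fun s => s.2.1) = (L.map (fun s => s.2.1)).filterMap Sum.getLeft?) ∧
    (∀ s ∈ con L, s.2.2 ∈ L.map (fun t => t.2.2)) ∧
    (∀ s ∈ con L, s.2.1 ∈ F → s.1 = u ∨ s.2.2 = u) := by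
  intro n
  induction n with
  | zero =>
    intro L hn
    have : L = [] := List.length_eq_zero_iff.mp (Nat.le_zero.mp hn)
    subst this
    intro a b _ _ _ _ _ _ _ _
    exact ⟨by simp [contractSteps], by simp [contractSteps], by simp [contractSteps],
      by simp [contractSteps], fun _ => rfl, by simp [contractSteps],
      by simp [contractSteps], by simp [contractSteps]⟩
  | succ n ih =>
    intro L hn a b ha hb hok hch hnd hA hhead hlast
    rcases L with _ | ⟨⟨a', e', b'⟩, rest⟩
    · exact ⟨by simp [contractSteps], by simp [contractSteps], by simp [contractSteps],
        by simp [contractSteps], fun _ => rfl, by simp [contractSteps],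
        by simp [contractSteps], by simp [contractSteps]⟩
    have haa : a' = a := hhead (a', e', b') rfl
    subst haa
    have hok0 := hok (a', e', b') (List.mem_cons_self)
    obtain ⟨he0, h10, h20, hne0⟩ := hok0
    match e' with
    | Sum.inl e =>
      have heH : e ∈ H.edges := (mem_edges_inl H u hu F uf e).mp he0
      by_cases he : e ∈ F
      · -- b' = uf e
        have hb' : b' = uf e := by
          rcases hA (a', Sum.inl e, b') (List.mem_cons_self) e rfl he with h | h
          · exact absurd (h ▸ ha) (huf_new e he)
          · exact h
        -- rest nonempty
        rcases rest with _ | ⟨t, rest'⟩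
        · exfalso
          have := hlast (a', Sum.inl e, b') rfl
          exact huf_new e he (by rw [← hb', show b' = b from this]; exact hb)
        -- identify t
        have htl : t.1 = uf e := by
          have := (List.isChain_cons_cons.mp hch).1
          rw [← this]; exact hb'.symm ▸ rfl
        have hokt := hok t (List.mem_cons_of_mem _ (List.mem_cons_self))
        rcases step_at_new H u hu F hF uf huf_inj huf_new e he t hokt htl with
          ⟨ht1, _, _, _⟩ | ⟨ht1, ht2⟩
        · exfalso
          simp only [List.map_cons, List.nodup_cons] at hnd
          exact hnd.1 (by rw [← ht1]; exact List.mem_cons_self)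
        -- contract L = (a', e, u) :: con rest'
        have hcon : con ((a', Sum.inl e, b') :: t :: rest') =
            (a', e, t.2.2) :: con rest' := by
          rw [contractSteps, if_pos he]
        have htu : t.2.2 = u := ht2
        -- IH on rest'
        have hlen' : rest'.length ≤ n := by simp at hn; omega
        have hch2 : List.IsChain Lnk rest' := ((List.isChain_cons_cons.mp hch).2).tail
        have hhead' : ∀ s ∈ rest'.head?, s.1 = u := by
          intro s hs
          have := (List.isChain_cons.mp (List.isChain_cons_cons.mp hch).2).1 s hs
          rw [← this, htu]
        have hlast' : ∀ s ∈ rest'.getLast?, s.2.2 = b := by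
          intro s hs
          refine hlast s ?_
          have hne : rest' ≠ [] := by
            intro h; rw [h] at hs; exact absurd hs (by simp)
          rcases rest' with _ | ⟨x, X⟩
          · exact absurd rfl hne
          · rw [List.getLast?_cons_cons, List.getLast?_cons_cons]; exact hs
        have hnd' : (rest'.map (fun s => s.2.1)).Nodup := by
          simp only [List.map_cons, List.nodup_cons] at hnd
          exact hnd.2.2
        obtain ⟨C1, C2, C3, C4, C5, C6, C7, C8⟩ := ih rest' hlen' u b hu hb
          (fun s hs => hok s (List.mem_cons_of_mem _ (List.mem_cons_of_mem _ hs)))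
          hch2 hnd'
          (fun s hs => hA s (List.mem_cons_of_mem _ (List.mem_cons_of_mem _ hs)))
          hhead' hlast'
        have hOk0 : Ok H (a', e, t.2.2) := by
          rw [htu]
          have ha' : a' ∈ H.inc e ∧ a' ≠ u := by
            rw [inc_inl_mem H u hu F uf e he] at h10
            rcases h10 with h | h
            · exact h
            · exact absurd (h ▸ ha) (huf_new e he)
          exact ⟨heH, ha'.1, hincident e he, ha'.2⟩
        refine ⟨?_, ?_, ?_, ?_, ?_, ?_, ?_, ?_⟩
        · rw [hcon]
          intro s hs
          rcases List.mem_cons.mp hs with rfl | hs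
          · exact hOk0
          · exact C1 s hs
        · rw [hcon]
          exact List.isChain_cons.mpr ⟨fun s hs => by
            show t.2.2 = s.1; rw [htu, C3 s hs], C2⟩
        · rw [hcon]; intro s hs; simp at hs; rw [← hs]
        · rw [hcon]
          rcases hc : con rest' with _ | ⟨x, X⟩
          · have : rest' = [] := C5 hc
            subst this
            intro s hs
            simp at hs
            rw [← hs, htu]
            have := hlast t (by rw [List.getLast?_cons_cons]; simp)
            rw [← this, htu]
          · intro s hs
            rw [List.getLast?_cons_cons] at hs
            exact C4 s (hc ▸ hs)
        · rw [hcon]; simp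
        · rw [hcon]
          simp only [List.map_cons, List.filterMap_cons, ht1]
          rw [C6]
          rfl
        · rw [hcon]
          intro s hs
          rcases List.mem_cons.mp hs with rfl | hs
          · simp
          · have := C7 s hs
            simp only [List.map_cons]
            exact List.mem_cons_of_mem _ (List.mem_cons_of_mem _ this)
        · rw [hcon]
          intro s hs
          rcases List.mem_cons.mp hs with rfl | hs
          · intro _; right; exact htu
          · exact C8 s hs
      · -- e ∉ F : single step
        have hb'H : b' ∈ H.inc e := by
          rw [inc_inl_not_mem H u hu F uf e he] at h20; exact h20
        have ha'H : a' ∈ H.inc e := by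
          rw [inc_inl_not_mem H u hu F uf e he] at h10; exact h10
        have hb'v : b' ∈ H.verts := H.inc_sub e heH hb'H
        have hcon : con ((a', Sum.inl e, b') :: rest) =
            (a', e, b') :: con rest := by
          rcases rest with _ | ⟨t, rest'⟩
          · rfl
          · rw [contractSteps, if_neg he]
        have hlen' : rest.length ≤ n := by simp at hn; omega
        have hhead' : ∀ s ∈ rest.head?, s.1 = b' := by
          intro s hs
          exact ((List.isChain_cons.mp hch).1 s hs).symm
        have hlast' : ∀ s ∈ rest.getLast?, s.2.2 = b := by
          intro s hs
          refine hlast s ?_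
          rcases rest with _ | ⟨x, X⟩
          · exact absurd hs (by simp)
          · rw [List.getLast?_cons_cons]; exact hs
        obtain ⟨C1, C2, C3, C4, C5, C6, C7, C8⟩ := ih rest hlen' b' b hb'v hb
          (fun s hs => hok s (List.mem_cons_of_mem _ hs))
          hch.tail (by simp only [List.map_cons, List.nodup_cons] at hnd; exact hnd.2)
          (fun s hs => hA s (List.mem_cons_of_mem _ hs))
          hhead' hlast'
        refine ⟨?_, ?_, ?_, ?_, ?_, ?_, ?_, ?_⟩
        · rw [hcon]
          intro s hs
          rcases List.mem_cons.mp hs with rfl | hs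
          · exact ⟨heH, ha'H, hb'H, hne0⟩
          · exact C1 s hs
        · rw [hcon]
          exact List.isChain_cons.mpr ⟨fun s hs => (C3 s hs).symm, C2⟩
        · rw [hcon]; intro s hs; simp at hs; rw [← hs]
        · rw [hcon]
          rcases hc : con rest with _ | ⟨x, X⟩
          · have : rest = [] := C5 hc
            subst this
            intro s hs
            simp at hs
            rw [← hs]
            exact hlast (a', Sum.inl e, b') rfl
          · intro s hs
            rw [List.getLast?_cons_cons] at hs
            exact C4 s (hc ▸ hs)
        · rw [hcon]; simp
        · rw [hcon]
          simp only [List.map_cons, List.filterMap_cons]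
          rw [C6]
          rfl
        · rw [hcon]
          intro s hs
          rcases List.mem_cons.mp hs with rfl | hs
          · simp
          · exact List.mem_cons_of_mem _ (C7 s hs)
        · rw [hcon]
          intro s hs
          rcases List.mem_cons.mp hs with rfl | hs
          · intro hf; exact absurd hf he
          · exact C8 s hs
    | Sum.inr f =>
      have hfF : f ∈ F := (mem_edges_inr H u hu F uf f).mp he0
      have h10' : a' = u := by
        rw [inc_inr] at h10
        rcases Finset.mem_insert.mp h10 with h | h
        · exact absurd (h ▸ ha) (huf_new f hfF)
        · exact Finset.mem_singleton.mp h
      have hb' : b' = uf f := by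
        rw [inc_inr] at h20
        rcases Finset.mem_insert.mp h20 with h | h
        · exact h
        · exact absurd (h10'.trans (Finset.mem_singleton.mp h).symm) hne0
      rcases rest with _ | ⟨t, rest'⟩
      · exfalso
        have := hlast (a', Sum.inr f, b') rfl
        exact huf_new f hfF (by rw [← hb', show b' = b from this]; exact hb)
      have htl : t.1 = uf f := by
        have := (List.isChain_cons_cons.mp hch).1
        rw [← this]; exact hb'.symm ▸ rfl
      have hokt := hok t (List.mem_cons_of_mem _ (List.mem_cons_self))
      rcases step_at_new H u hu F hF uf huf_inj huf_new f hfF t hokt htl with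
        ⟨ht1, htc1, htc2, htc3⟩ | ⟨ht1, _⟩
      swap
      · exfalso
        simp only [List.map_cons, List.nodup_cons] at hnd
        exact hnd.1 (by rw [← ht1]; exact List.mem_cons_self)
      have hcon : con ((a', Sum.inr f, b') :: t :: rest') =
          (a', f, t.2.2) :: con rest' := by
        rw [contractSteps]
      have hlen' : rest'.length ≤ n := by simp at hn; omega
      have hch2 : List.IsChain Lnk rest' := ((List.isChain_cons_cons.mp hch).2).tail
      have hhead' : ∀ s ∈ rest'.head?, s.1 = t.2.2 := by
        intro s hs
        exact ((List.isChain_cons.mp (List.isChain_cons_cons.mp hch).2).1 s hs).symm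
      have hlast' : ∀ s ∈ rest'.getLast?, s.2.2 = b := by
        intro s hs
        refine hlast s ?_
        have hne : rest' ≠ [] := by
          intro h; rw [h] at hs; exact absurd hs (by simp)
        rcases rest' with _ | ⟨x, X⟩
        · exact absurd rfl hne
        · rw [List.getLast?_cons_cons, List.getLast?_cons_cons]; exact hs
      have hnd' : (rest'.map (fun s => s.2.1)).Nodup := by
        simp only [List.map_cons, List.nodup_cons] at hnd
        exact hnd.2.2
      obtain ⟨C1, C2, C3, C4, C5, C6, C7, C8⟩ := ih rest' hlen' t.2.2 b htc3 hb
        (fun s hs => hok s (List.mem_cons_of_mem _ (List.mem_cons_of_mem _ hs)))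
        hch2 hnd'
        (fun s hs => hA s (List.mem_cons_of_mem _ (List.mem_cons_of_mem _ hs)))
        hhead' hlast'
      have hOk0 : Ok H (a', f, t.2.2) := by
        refine ⟨hF hfF, ?_, htc1, ?_⟩
        · rw [h10']; exact hincident f hfF
        · rw [h10']; exact fun h => htc2 h.symm
      refine ⟨?_, ?_, ?_, ?_, ?_, ?_, ?_, ?_⟩
      · rw [hcon]
        intro s hs
        rcases List.mem_cons.mp hs with rfl | hs
        · exact hOk0
        · exact C1 s hs
      · rw [hcon]
        exact List.isChain_cons.mpr ⟨fun s hs => (C3 s hs).symm, C2⟩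
      · rw [hcon]; intro s hs; simp at hs; rw [← hs]
      · rw [hcon]
        rcases hc : con rest' with _ | ⟨x, X⟩
        · have : rest' = [] := C5 hc
          subst this
          intro s hs
          simp at hs
          rw [← hs]
          exact hlast t (by rw [List.getLast?_cons_cons]; simp)
        · intro s hs
          rw [List.getLast?_cons_cons] at hs
          exact C4 s (hc ▸ hs)
      · rw [hcon]; simp
      · rw [hcon]
        simp only [List.map_cons, List.filterMap_cons, ht1]
        rw [C6]
        rfl
      · rw [hcon]
        intro s hs
        rcases List.mem_cons.mp hs with rfl | hs
        · simp
        · have := C7 s hs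
          simp only [List.map_cons]
          exact List.mem_cons_of_mem _ (List.mem_cons_of_mem _ this)
      · rw [hcon]
        intro s hs
        rcases List.mem_cons.mp hs with rfl | hs
        · intro _; left; exact h10'
        · exact C8 s hs


include hF huf_new in
lemma step_has_vert (s : V × (β ⊕ β) × V) (hs : Ok (H') s) :
    s.1 ∈ H.verts ∨ s.2.2 ∈ H.verts := by
  obtain ⟨hse, h1, h2, hne⟩ := hs
  match he' : s.2.1 with
  | Sum.inl e =>
    rw [he'] at h1 h2 hse
    have heH : e ∈ H.edges := (mem_edges_inl H u hu F uf e).mp hse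
    by_cases he : e ∈ F
    · rw [inc_inl_mem H u hu F uf e he] at h1 h2
      rcases h1 with ⟨h1, _⟩ | h1
      · exact Or.inl (H.inc_sub e heH h1)
      · rcases h2 with ⟨h2, _⟩ | h2
        · exact Or.inr (H.inc_sub e heH h2)
        · exact absurd (h1.trans h2.symm) hne
    · rw [inc_inl_not_mem H u hu F uf e he] at h1
      exact Or.inl (H.inc_sub e heH h1)
  | Sum.inr f =>
    rw [he'] at h1 h2 hse
    have hfF : f ∈ F := (mem_edges_inr H u hu F uf f).mp hse
    rw [inc_inr] at h1 h2
    rcases Finset.mem_insert.mp h1 with h | h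
    · rcases Finset.mem_insert.mp h2 with h' | h'
      · exact absurd (h.trans h'.symm) hne
      · exact Or.inr (by rw [Finset.mem_singleton.mp h']; exact hu)
    · exact Or.inl (by rw [Finset.mem_singleton.mp h]; exact hu)

include hF huf_new in
lemma exists_fst_vert (L : List (V × (β ⊕ β) × V)) (hne : L ≠ [])
    (hok : ∀ s ∈ L, Ok (H') s) (hch : List.IsChain Lnk L)
    (hclosed : ∀ s ∈ L.head?, ∀ t ∈ L.getLast?, t.2.2 = s.1) :
    ∃ s ∈ L, s.1 ∈ H.verts := by
  rcases L with _ | ⟨s0, rest⟩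
  · exact absurd rfl hne
  rcases step_has_vert H u hu F hF uf huf_new s0 (hok s0 (List.mem_cons_self)) with h | h
  · exact ⟨s0, List.mem_cons_self, h⟩
  rcases rest with _ | ⟨t, rest'⟩
  · have := hclosed s0 rfl s0 rfl
    exact ⟨s0, List.mem_cons_self, this ▸ h⟩
  · have hlk : s0.2.2 = t.1 := (List.isChain_cons_cons.mp hch).1
    exact ⟨t, List.mem_cons_of_mem _ (List.mem_cons_self), hlk ▸ h⟩

include hF huf_new in
lemma rotate_exists (L : List (V × (β ⊕ β) × V)) (hne : L ≠ [])
    (hok : ∀ s ∈ L, Ok (H') s) (hch : List.IsChain Lnk L)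
    (hclosed : ∀ s ∈ L.head?, ∀ t ∈ L.getLast?, t.2.2 = s.1) :
    ∃ R : List (V × (β ⊕ β) × V), R.Perm L ∧ List.IsChain Lnk R ∧
      (∀ s ∈ R.head?, ∀ t ∈ R.getLast?, t.2.2 = s.1) ∧
      (∀ s ∈ R.head?, s.1 ∈ H.verts) ∧ R.length = L.length := by
  obtain ⟨s, hsL, hsv⟩ := exists_fst_vert H u hu F hF uf huf_new L hne hok hch hclosed
  obtain ⟨L1, L2, rfl⟩ := List.append_of_mem hsL
  refine ⟨(s :: L2) ++ L1, List.perm_append_comm, ?_, ?_, ?_, by simp; omega⟩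
  · -- chain
    obtain ⟨hc1, hc2, hc3⟩ := List.isChain_append.mp hch
    refine List.isChain_append.mpr ⟨hc2, hc1, ?_⟩
    intro x hx y hy
    rcases hL1 : L1 with _ | ⟨z, Z⟩
    · rw [hL1] at hy; exact absurd hy (by simp)
    · have hgl : ((s :: L2)).getLast? = (L1 ++ s :: L2).getLast? := by
        rw [List.getLast?_append_of_ne_nil _ (by simp)]
      have hhd : ∀ w ∈ (L1 ++ s :: L2).head?, w.1 ∈ Set.univ → True := fun _ _ _ => trivial
      have hx' : x ∈ (L1 ++ s :: L2).getLast? := hgl ▸ hx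
      have hy' : y ∈ (L1 ++ s :: L2).head? := by
        rw [hL1]
        rw [hL1] at hy
        simp only [List.cons_append, List.head?_cons]
        simp only [List.head?_cons] at hy
        exact hy
      exact hclosed y hy' x hx'
  · -- closure
    intro x hx y hy
    simp only [List.cons_append, List.head?_cons, Option.mem_some_iff] at hx
    rcases hL1 : L1 with _ | ⟨z, Z⟩
    · subst hL1
      simp only [List.append_nil] at hy ⊢
      have := hclosed s (by simp) y hy
      rw [← hx]
      exact this
    · have hy' : y ∈ L1.getLast? := by
        rw [List.getLast?_append_of_ne_nil _ (by rw [hL1]; simp)] at hy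
        exact hy
      obtain ⟨hc1, hc2, hc3⟩ := List.isChain_append.mp hch
      have := hc3 y hy' s (by simp)
      rw [← hx]
      exact this
  · -- head in verts
    intro x hx
    simp only [List.cons_append, List.head?_cons, Option.mem_some_iff] at hx
    rw [← hx]
    exact hsv

include hF huf_inj huf_new in
lemma lemma_A {κ : Type} (Ls : κ → List (V × (β ⊕ β) × V))
    (hok : ∀ k, ∀ s ∈ Ls k, Ok (H') s) (hch : ∀ k, List.IsChain Lnk (Ls k))
    (hnd : ∀ k, ((Ls k).map (fun s => s.2.1)).Nodup)
    (hhead : ∀ k, ∀ s ∈ (Ls k).head?, s.1 ∈ H.verts)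
    (hlastv : ∀ k, ∀ s ∈ (Ls k).getLast?, s.2.2 ∈ H.verts)
    (hdisj : ∀ k l, k ≠ l → ∀ x ∈ (Ls k).map (fun s => s.2.1),
      x ∉ (Ls l).map (fun s => s.2.1))
    (hcov : ∀ f ∈ F, ∃ k, Sum.inr f ∈ (Ls k).map (fun s => s.2.1)) :
    ∀ k, ∀ s ∈ Ls k, ∀ f, s.2.1 = Sum.inl f → f ∈ F →
      s.1 = uf f ∨ s.2.2 = uf f := by
  intro k s hs f hsf hf
  by_contra hcon
  push_neg at hcon
  obtain ⟨hc1, hc2⟩ := hcon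
  obtain ⟨l, hl⟩ := hcov f hf
  obtain ⟨t, htL, hte⟩ := List.mem_map.mp hl
  obtain ⟨hte', ht1, ht2, htne⟩ := hok l t htL
  rw [hte, inc_inr] at ht1 ht2
  -- common contradiction from a step p in Ls l with edge inl f or inr f at uf f
  have key : ∀ p ∈ Ls l, p ≠ t → (p.1 = uf f ∨ p.2.2 = uf f) →
      (p.2.1 = Sum.inl f ∨ p.2.1 = Sum.inr f) → False := by
    intro p hpL hpt hptouch hpe
    rcases hpe with hpe | hpe
    · -- p has edge inl f; s has edge inl f
      by_cases hkl : l = k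
      · subst hkl
        have heq : p = s := List.inj_on_of_nodup_map (hnd l) hpL hs (by rw [hpe, hsf])
        subst heq
        rcases hptouch with h | h
        · exact hc1 h
        · exact hc2 h
      · exact hdisj l k (hkl) (Sum.inl f)
          (List.mem_map.mpr ⟨p, hpL, hpe⟩)
          (List.mem_map.mpr ⟨s, hs, hsf⟩)
    · exact hpt (List.inj_on_of_nodup_map (hnd l) hpL htL (by rw [hpe, hte]))
  rcases Finset.mem_insert.mp ht1 with h1 | h1
  · -- t.1 = uf f, so t is not first; predecessor p ends at uf f
    obtain ⟨A, B, hAB⟩ := List.append_of_mem htL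
    rcases List.eq_nil_or_concat A with hA | ⟨A', p, hA'⟩
    · subst hA
      simp only [List.nil_append] at hAB
      have := hhead l t (by rw [hAB]; rfl)
      rw [h1] at this
      exact huf_new f hf this
    · have hch' : List.IsChain Lnk (A' ++ p :: t :: B) := by
        have h2 := hch l
        rw [hAB, hA'] at h2
        simpa [List.append_assoc] using h2
      have hlk : Lnk p t := by
        have := (List.isChain_append.mp hch').2.1
        exact (List.isChain_cons_cons.mp this).1
      have hpL : p ∈ Ls l := by
        rw [hAB, hA']
        simp
      have hpuf : uf f ∈ (H').inc p.2.1 := by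
        have := (hok l p hpL).2.2.1
        rw [show p.2.2 = uf f from hlk.trans h1] at this
        exact this
      have hpe := classify_new H u hu F hF uf huf_inj huf_new f hf p.2.1
        (hok l p hpL).1 hpuf
      have hpt : p ≠ t := by
        intro h
        rw [h] at hlk
        exact htne hlk.symm
      exact key p hpL hpt (Or.inr (hlk.trans h1)) hpe
  · -- t.1 = u hence t.2.2 = uf f, successor q starts at uf f
    have h1' : t.1 = u := Finset.mem_singleton.mp h1
    have h2' : t.2.2 = uf f := by
      rcases Finset.mem_insert.mp ht2 with h | h
      · exact h
      · exact absurd (h1'.trans (Finset.mem_singleton.mp h).symm) htne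
    obtain ⟨A, B, hAB⟩ := List.append_of_mem htL
    rcases hB : B with _ | ⟨q, B'⟩
    · subst hB
      have hgl : (Ls l).getLast? = some t := by
        rw [hAB, List.getLast?_append_of_ne_nil _ (by simp)]
        rfl
      have := hlastv l t hgl
      rw [h2'] at this
      exact huf_new f hf this
    · have hch' : List.IsChain Lnk (A ++ t :: q :: B') := by
        have := hch l
        rw [hAB, hB] at this
        exact this
      have hlk : Lnk t q := by
        have := (List.isChain_append.mp hch').2.1
        exact (List.isChain_cons_cons.mp this).1
      have hqL : q ∈ Ls l := by
        rw [hAB, hB]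
        exact List.mem_append_right _ (List.mem_cons_of_mem _ (List.mem_cons_self))
      have hquf : uf f ∈ (H').inc q.2.1 := by
        have := (hok l q hqL).2.1
        rw [show q.1 = uf f from hlk.symm.trans h2'] at this
        exact this
      have hqe := classify_new H u hu F hF uf huf_inj huf_new f hf q.2.1
        (hok l q hqL).1 hquf
      have hqt : q ≠ t := by
        intro h
        rw [h] at hlk
        have : t.1 = uf f := hlk.symm.trans h2'
        rw [h1'] at this
        exact huf_new f hf (this ▸ hu)
      exact key q hqL hqt (Or.inl (hlk.symm.trans h2')) hqe


include hF hincident huf_inj huf_new in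
lemma backward {κ : Type} (T' : κ → (H').ClosedTrail) (hfam : (H').IsEulerFamily T') :
    ∃ T : κ → H.ClosedTrail, H.IsEulerFamily T ∧ ∀ f ∈ F, ∃ k, (T k).traverses u f := by
  obtain ⟨hdisj, hanch, hcov⟩ := hfam
  have hne : ∀ k, (T' k).walk.steps ≠ [] := fun k => trail_steps_ne_nil (T' k)
  have hclosed : ∀ k, ∀ s ∈ (T' k).walk.steps.head?, ∀ t ∈ (T' k).walk.steps.getLast?,
      t.2.2 = s.1 := by
    intro k s hs t ht
    rw [steps_head _ s hs, steps_getLast _ t ht]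
  choose R hR1 hR2 hR3 hR4 hR5 using fun k =>
    rotate_exists H u hu F hF uf huf_new ((T' k).walk.steps) (hne k)
      (steps_ok _) (steps_chain' _) (hclosed k)
  have hRne : ∀ k, R k ≠ [] := by
    intro k h
    have := hR5 k
    rw [h] at this
    exact hne k (List.length_eq_zero_iff.mp this.symm)
  have hRok : ∀ k, ∀ s ∈ R k, Ok (H') s := fun k s hs =>
    steps_ok _ s ((hR1 k).mem_iff.mp hs)
  have hRedge : ∀ k, ((R k).map (fun s => s.2.1)).Perm ((T' k).walk.edgeList) := fun k =>
    (hR1 k).map _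
  have hRnd : ∀ k, ((R k).map (fun s => s.2.1)).Nodup := fun k =>
    ((hRedge k).nodup_iff).mpr (T' k).nodup
  have hRlastv : ∀ k, ∀ s ∈ (R k).getLast?, s.2.2 ∈ H.verts := by
    intro k s hs
    rcases hRk : R k with _ | ⟨x, X⟩
    · exact absurd hRk (hRne k)
    · have h1 := hR3 k x (by rw [hRk]; rfl) s (hRk ▸ hs)
      have h2 := hR4 k x (by rw [hRk]; rfl)
      rw [h1]; exact h2
  have hA := lemma_A H u hu F hF uf huf_inj huf_new R hRok
    (fun k => hR2 k) hRnd hR4 hRlastv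
    (fun k l hkl x hx => fun hx' => hdisj k l hkl x
      ((hRedge k).mem_iff.mp hx) ((hRedge l).mem_iff.mp hx'))
    (fun f hf => by
      obtain ⟨k, hk⟩ := hcov (Sum.inr f) (Finset.mem_union_right _
        (Finset.mem_image.mpr ⟨f, hf, rfl⟩))
      exact ⟨k, (hRedge k).mem_iff.mpr hk⟩)
  -- base of each rotated list
  have hbase : ∀ k, ∃ a ∈ H.verts, (∀ s ∈ (R k).head?, s.1 = a) ∧
      (∀ s ∈ (R k).getLast?, s.2.2 = a) := by
    intro k
    rcases hRk : R k with _ | ⟨x, X⟩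
    · exact absurd hRk (hRne k)
    · refine ⟨x.1, hR4 k x (by rw [hRk]; rfl), ?_, ?_⟩
      · intro s hs
        simp at hs
        rw [← hs]
      · intro s hs
        exact hR3 k x (by rw [hRk]; rfl) s (by rw [hRk]; exact hs)
  choose a ha hahead halast using hbase
  have hspec := fun k => contract_spec H u hu F hF hincident uf huf_inj huf_new
    ((R k).length) (R k) le_rfl (a k) (a k) (ha k) (ha k) (hRok k) (hR2 k) (hRnd k)
    (fun s hs f hsf hf => hA k s hs f hsf hf) (hahead k) (halast k)
  have hC1 := fun k => (hspec k).1
  have hC2 := fun k => (hspec k).2.1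
  have hC3 := fun k => (hspec k).2.2.1
  have hC4 := fun k => (hspec k).2.2.2.1
  have hC5 := fun k => (hspec k).2.2.2.2.1
  have hC6 := fun k => (hspec k).2.2.2.2.2.1
  have hC7 := fun k => (hspec k).2.2.2.2.2.2.1
  have hC8 := fun k => (hspec k).2.2.2.2.2.2.2
  -- length at least 2
  have hLEN : ∀ k, 2 ≤ (contractSteps F (R k)).length := by
    intro k
    rcases hM : contractSteps F (R k) with _ | ⟨x, M⟩
    · exact absurd (hC5 k hM) (hRne k)
    rcases hM2 : M with _ | ⟨y, M'⟩
    · exfalso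
      have h1 : x.1 = a k := hC3 k x (by rw [hM]; rfl)
      have h2 : x.2.2 = a k := hC4 k x (by rw [hM, hM2]; rfl)
      have := (hC1 k x (by rw [hM]; exact List.mem_cons_self)).2.2.2
      exact this (h1.trans h2.symm)
    · simp only [List.length_cons]; omega
  have hND : ∀ k, ((contractSteps F (R k)).map (fun s => s.2.1)).Nodup := by
    intro k
    rw [hC6 k]
    refine List.Nodup.filterMap ?_ (hRnd k)
    intro x y e hx hy
    match x, y with
    | Sum.inl x', Sum.inl y' =>
      simp only [Sum.getLeft?, Option.mem_def, Option.some.injEq] at hx hy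
      rw [hx, hy]
    | Sum.inl x', Sum.inr y' => simp [Sum.getLeft?] at hy
    | Sum.inr x', _ => simp [Sum.getLeft?] at hx
  -- edge membership characterization
  have hmemE : ∀ k e, e ∈ (contractSteps F (R k)).map (fun s => s.2.1) ↔
      Sum.inl e ∈ (T' k).walk.edgeList := by
    intro k e
    rw [hC6 k]
    rw [List.mem_filterMap]
    constructor
    · rintro ⟨x, hx, hxe⟩
      match x with
      | Sum.inl e' =>
        simp at hxe
        subst hxe
        exact (hRedge k).mem_iff.mp hx
      | Sum.inr e' => simp at hxe
    · intro h
      exact ⟨Sum.inl e, (hRedge k).mem_iff.mpr h, rfl⟩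
  refine ⟨fun k => mkTrail H (a k) (ha k) (contractSteps F (R k))
    (hC1 k) (hC2 k) (hC3 k) (hC4 k) (hLEN k) (hND k), ⟨?_, ?_, ?_⟩, ?_⟩
  · -- edge disjoint
    intro k l hkl e he he'
    simp only [Walk.edgeList, mkTrail_steps] at he he'
    exact hdisj k l hkl (Sum.inl e) ((hmemE k e).mp he) ((hmemE l e).mp he')
  · -- anchor disjoint
    intro k l hkl v hv hv'
    simp only [Walk.anchors, mkTrail_steps] at hv hv'
    have hchar : ∀ m, v ∈ (a m) :: (contractSteps F (R m)).map (fun s => s.2.2) →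
        v ∈ (T' m).walk.anchors := by
      intro m hm
      rcases List.mem_cons.mp hm with rfl | hm
      · rcases hRm : R m with _ | ⟨x, X⟩
        · exact absurd hRm (hRne m)
        · have hx1 : x.1 = a m := hahead m x (by rw [hRm]; rfl)
          have hxmem : x ∈ (T' m).walk.steps :=
            (hR1 m).mem_iff.mp (by rw [hRm]; exact List.mem_cons_self)
          rw [← hx1]
          exact fst_mem_anchors _ x hxmem
      · obtain ⟨s, hsm, rfl⟩ := List.mem_map.mp hm
        obtain ⟨t, ht, hts⟩ := List.mem_map.mp (hC7 m s hsm)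
        have htmem : t ∈ (T' m).walk.steps := (hR1 m).mem_iff.mp ht
        rw [← hts]
        exact snd_mem_anchors _ t htmem
    exact hanch k l hkl v (hchar k hv) (hchar l hv')
  · -- coverage
    intro e he
    obtain ⟨k, hk⟩ := hcov (Sum.inl e) (Finset.mem_union_left _
      (Finset.mem_image.mpr ⟨e, he, rfl⟩))
    refine ⟨k, ?_⟩
    simp only [Walk.edgeList, mkTrail_steps]
    exact (hmemE k e).mpr hk
  · -- traversal
    intro f hf
    obtain ⟨k, hk⟩ := hcov (Sum.inl f) (Finset.mem_union_left _
      (Finset.mem_image.mpr ⟨f, hF hf, rfl⟩))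
    refine ⟨k, ?_⟩
    have : f ∈ (contractSteps F (R k)).map (fun s => s.2.1) := (hmemE k f).mpr hk
    obtain ⟨s, hsm, hse⟩ := List.mem_map.mp this
    refine ⟨s, ?_, hse, ?_⟩
    · rw [mkTrail_steps]
      exact hsm
    · exact hC8 k s hsm (by rw [hse]; exact hf)

end Contract
end EulerAux

open EulerHypergraph in
/-- Lemma 6.4: `H` has an Euler family (tour) traversing `u` via each edge of `F` iff
`H'` has an Euler family (tour). -/
theorem eulerFamily_traversing_iff_splitOff
    {V β : Type} [DecidableEq V] [DecidableEq β]
    (H : EulerHypergraph V β) (u : V) (hu : u ∈ H.verts)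
    (F : Finset β) (hF : F ⊆ H.edges) (hincident : ∀ f ∈ F, u ∈ H.inc f)
    (uf : β → V) (huf_inj : Set.InjOn uf ↑F) (huf_new : ∀ f ∈ F, uf f ∉ H.verts) :
    ((∃ (κ : Type) (T : κ → H.ClosedTrail), H.IsEulerFamily T ∧
        ∀ f ∈ F, ∃ k, (T k).traverses u f) ↔
      (H.splitOff u hu F uf).HasEulerFamily) ∧
    ((∃ T : H.ClosedTrail, H.IsEulerTour T ∧ ∀ f ∈ F, T.traverses u f) ↔
      (H.splitOff u hu F uf).HasEulerTour) := by
  constructor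
  · constructor
    · rintro ⟨κ, T, hfam, htrav⟩
      obtain ⟨T', hT', -⟩ :=
        EulerAux.forward H u hu F hF hincident uf huf_inj huf_new T hfam htrav
      exact ⟨κ, T', hT'⟩
    · rintro ⟨κ, T', hfam⟩
      obtain ⟨T, hT, htrav⟩ :=
        EulerAux.backward H u hu F hF hincident uf huf_inj huf_new T' hfam
      exact ⟨κ, T, hT, htrav⟩
  · constructor
    · rintro ⟨T, htour, htrav⟩
      have hfam : H.IsEulerFamily (fun _ : Unit => T) :=
        ⟨fun k l h => (h (Subsingleton.elim k l)).elim,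
         fun k l h => (h (Subsingleton.elim k l)).elim,
         fun e he => ⟨(), htour e he⟩⟩
      obtain ⟨T', hT', -⟩ :=
        EulerAux.forward H u hu F hF hincident uf huf_inj huf_new (fun _ : Unit => T)
          hfam (fun f hf => ⟨(), htrav f hf⟩)
      refine ⟨T' (), ?_⟩
      intro e he
      obtain ⟨⟨⟩, hk⟩ := hT'.2.2 e he
      exact hk
    · rintro ⟨T', htour⟩
      have hfam : (H.splitOff u hu F uf).IsEulerFamily (fun _ : Unit => T') :=
        ⟨fun k l h => (h (Subsingleton.elim k l)).elim,
         fun k l h => (h (Subsingleton.elim k l)).elim,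
         fun e he => ⟨(), htour e he⟩⟩
      obtain ⟨T, hT, htrav⟩ :=
        EulerAux.backward H u hu F hF hincident uf huf_inj huf_new (fun _ : Unit => T') hfam
      refine ⟨T (), ?_, ?_⟩
      · intro e he
        obtain ⟨⟨⟩, hk⟩ := hT.2.2 e he
        exact hk
      · intro f hf
        obtain ⟨⟨⟩, hk⟩ := htrav f hf
        exact hk
end
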